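/- arXiv:1601.01231 — 6 statements merged into one kernel-verified Lean document; each statement's English description precedes it below -/
import Mathlib

section
/- Fix integers k ≥ 0 and n ≥ 5k+5. Then (i) every semi-arc k-visibility graph on n vertices has at most (k+1)(4n−k−2)/2 edges, and (ii) there exists a semi-arc k-visibility representation on n vertices whose semi-arc k-visibility graph has exactly (k+1)(4n−k−2)/2 edges. Hence the maximum number of edges in a semi-arc k-visibility graph with n ≥ 5k+5 vertices is (k+1)(2n−(k+2)/2), and this bound is optimal. -/
open Real

/-- `β = α + π` reduced mod `2π` (for `α ∈ [0, 2π)`). -/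
noncomputable def oppositeAngle (α : ℝ) : ℝ :=
  if α + π < 2 * π then α + π else α + π - 2 * π

/-- Adjacency condition for `i < j` in a semi-arc `k`-visibility representation
given by the angles `θ`: either a radial line of sight not through the center
crossing at most `k` intervening arcs (a), or a line of sight through the center
crossing at most `k` other arcs (b). -/
def semiArcAdj (k : ℕ) {n : ℕ} (θ : Fin n → ℝ) (i j : Fin n) : Prop :=
  ({m : Fin n | i < m ∧ m < j ∧ min (θ i) (θ j) < θ m}.ncard ≤ k)
  ∨ ∃ α : ℝ, 0 ≤ α ∧ α < 2 * π ∧ α ≤ θ i ∧ oppositeAngle α ≤ θ j ∧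
      ({m : Fin n | (m < i ∧ α ≤ θ m) ∨ (m < j ∧ m ≠ i ∧ oppositeAngle α ≤ θ m)}.ncard ≤ k)

/-- The semi-arc `k`-visibility graph of the representation given by angles `θ`. -/
def semiArcGraph (k : ℕ) {n : ℕ} (θ : Fin n → ℝ) : SimpleGraph (Fin n) :=
  SimpleGraph.fromRel (fun i j => i < j ∧ semiArcAdj k θ i j)

/-!
For `i < j`, adjacency is decided by two blocker counts: the radial one, and the one of the line
of sight through the center at the optimal angle `min (θ i) (θ j - π)`.

Upper bound: an edge seen radially with `θ i < θ j` is labelled by `i` and its radial count `t`,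
where `t ≤ k` and `i + t ≤ n - 2`; every other edge is charged to one of its endpoints `v` together
with a blocker count `c ≤ k`. Blocker counts increase strictly as the free endpoint moves, so both
labellings are injective; the three kinds of charges are told apart by comparing `c` with the
number of earlier arcs longer than arc `v`, and `θ v` with `π`. This leaves room for at most
`(k + 1) (2 n - k - 2) / 2 + n (k + 1)` edges.

Lower bound: take `2 k + 2` short arcs followed by long arcs, all increasing. Every pair at
distance at most `k + 1` is radially adjacent, and every arc has `k + 1` further neighbours through
the center.
-/

namespace SemiArc

open Finset

section Counting

lemma ncard_le_sub_of_forall_mem_Ico {n a b : ℕ} {s : Set (Fin n)}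
    (h : ∀ m ∈ s, a ≤ (m : ℕ) ∧ (m : ℕ) < b) : s.ncard ≤ b - a := by
  calc s.ncard = (Fin.val '' s).ncard := (Set.ncard_image_of_injective _ Fin.val_injective).symm
    _ ≤ (Set.Ico a b).ncard :=
        Set.ncard_le_ncard (by rintro _ ⟨m, hm, rfl⟩; exact h m hm) (Set.finite_Ico a b)
    _ = b - a := Set.ncard_Ico_nat a b

lemma ncard_edgeSet_eq_ncard_setOf_lt {V : Type*} [LinearOrder V] (G : SimpleGraph V) :
    G.edgeSet.ncard = {p : V × V | p.1 < p.2 ∧ G.Adj p.1 p.2}.ncard := by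
  have hedges : G.edgeSet = (fun p : V × V => s(p.1, p.2)) '' {p | p.1 < p.2 ∧ G.Adj p.1 p.2} := by
    ext e
    induction e with
    | _ a b =>
      simp only [SimpleGraph.mem_edgeSet, Set.mem_image, Set.mem_ofPred_eq, Prod.exists,
        Sym2.eq_iff]
      refine ⟨fun h => ?_, ?_⟩
      · rcases lt_trichotomy a b with hab | rfl | hba
        · exact ⟨a, b, ⟨hab, h⟩, Or.inl ⟨rfl, rfl⟩⟩
        · exact absurd h G.irrefl
        · exact ⟨b, a, ⟨hba, h.symm⟩, Or.inr ⟨rfl, rfl⟩⟩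
      · rintro ⟨c, d, ⟨-, h⟩, ⟨rfl, rfl⟩ | ⟨rfl, rfl⟩⟩
        exacts [h, h.symm]
  rw [hedges, Set.InjOn.ncard_image]
  rintro ⟨a, b⟩ hab ⟨c, d⟩ hcd h
  rcases Sym2.eq_iff.mp h with ⟨rfl, rfl⟩ | ⟨rfl, rfl⟩
  · rfl
  · exact absurd hab.1 hcd.1.not_gt

end Counting

section Adjacency

variable {n : ℕ} (θ : Fin n → ℝ)

lemma oppositeAngle_of_lt_pi {α : ℝ} (h : α < π) : oppositeAngle α = α + π :=
  if_pos (by linarith)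

lemma oppositeAngle_of_pi_le {α : ℝ} (h : π ≤ α) : oppositeAngle α = α - π := by
  rw [oppositeAngle, if_neg (by linarith)]
  ring

lemma oppositeAngle_sub_pi {x : ℝ} (h : x < 2 * π) : oppositeAngle (x - π) = x := by
  rw [oppositeAngle_of_lt_pi (by linarith)]
  ring

def radialBlockers (i j : Fin n) : Set (Fin n) :=
  {m | i < m ∧ m < j ∧ min (θ i) (θ j) < θ m}

def centralBlockers (i j : Fin n) (α : ℝ) : Set (Fin n) :=
  {m | (m < i ∧ α ≤ θ m) ∨ (m < j ∧ m ≠ i ∧ oppositeAngle α ≤ θ m)}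

variable {θ}

lemma semiArcGraph_adj_of_lt {k : ℕ} {i j : Fin n} (hij : i < j) :
    (semiArcGraph k θ).Adj i j ↔ semiArcAdj k θ i j := by
  simp [semiArcGraph, hij, hij.ne, hij.not_gt]

lemma centralBlockers_subset_of_le {i j : Fin n} {α β : ℝ} (h : α ≤ β)
    (h' : oppositeAngle α ≤ oppositeAngle β) :
    centralBlockers θ i j β ⊆ centralBlockers θ i j α := by
  rintro m (⟨hm, hβ⟩ | ⟨hm, hmi, hβ⟩)
  exacts [Or.inl ⟨hm, h.trans hβ⟩, Or.inr ⟨hm, hmi, h'.trans hβ⟩]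

lemma radialBlockers_subset_centralBlockers {i j : Fin n} {α : ℝ}
    (h : oppositeAngle α ≤ min (θ i) (θ j)) :
    radialBlockers θ i j ⊆ centralBlockers θ i j α :=
  fun _ ⟨him, hmj, hm⟩ => Or.inr ⟨hmj, him.ne', h.trans hm.le⟩

/-- A line of sight through the center at `α ≥ π` is blocked by every arc blocking the radial one,
and among `α < π` the largest admissible value `min (θ i) (θ j - π)` has the fewest blockers. -/
lemma semiArcAdj_iff {k : ℕ} {i j : Fin n} (hi : 0 ≤ θ i) (hj : θ j < 2 * π) :
    semiArcAdj k θ i j ↔ (radialBlockers θ i j).ncard ≤ k ∨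
      (π ≤ θ j ∧ (centralBlockers θ i j (min (θ i) (θ j - π))).ncard ≤ k) := by
  have hmin : min (θ i) (θ j - π) < π := (min_le_right _ _).trans_lt (by linarith)
  refine ⟨?_, ?_⟩
  · rintro (hR | ⟨α, hα0, -, hαi, hαj, hC⟩)
    · exact Or.inl hR
    rcases lt_or_ge α π with hα | hα
    · rw [oppositeAngle_of_lt_pi hα] at hαj
      refine Or.inr ⟨by linarith, le_trans (Set.ncard_le_ncard ?_) hC⟩
      have hle : α ≤ min (θ i) (θ j - π) := le_min hαi (by linarith)
      exact centralBlockers_subset_of_le hle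
        (by rw [oppositeAngle_of_lt_pi hα, oppositeAngle_of_lt_pi hmin]; linarith)
    · rw [oppositeAngle_of_pi_le hα] at hαj
      refine Or.inl (le_trans (Set.ncard_le_ncard (radialBlockers_subset_centralBlockers ?_)) hC)
      rw [oppositeAngle_of_pi_le hα]
      exact le_min (by linarith) hαj
  · rintro (hR | ⟨hπ, hC⟩)
    · exact Or.inl hR
    refine Or.inr ⟨_, le_min hi (by linarith), by linarith, min_le_left _ _, ?_, hC⟩
    rw [oppositeAngle_of_lt_pi hmin]
    linarith [min_le_right (θ i) (θ j - π)]

end Adjacency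

section Blockers

variable {n : ℕ} {θ : Fin n → ℝ}

def higherPredecessors (θ : Fin n → ℝ) (v : Fin n) : Set (Fin n) :=
  {m | m < v ∧ θ v < θ m}

lemma ncard_lt_ncard_of_insert_subset {α : Type*} [Finite α] {s t : Set α} {x : α} (hx : x ∉ s)
    (h : insert x s ⊆ t) : s.ncard < t.ncard :=
  Set.ncard_lt_ncard ((Set.ssubset_insert hx).trans_subset h)

lemma ncard_radialBlockers_le (i j : Fin n) : (radialBlockers θ i j).ncard ≤ j - (i + 1) :=
  ncard_le_sub_of_forall_mem_Ico fun _ ⟨him, hmj, _⟩ => ⟨him, hmj⟩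

lemma higherPredecessors_subset_centralBlockers_left {i j : Fin n} {α : ℝ} (h : α ≤ θ i) :
    higherPredecessors θ i ⊆ centralBlockers θ i j α :=
  fun _ ⟨hmi, hm⟩ => Or.inl ⟨hmi, h.trans hm.le⟩

lemma higherPredecessors_subset_centralBlockers_right {i j : Fin n} {α : ℝ} (hij : θ i < θ j)
    (hα : α ≤ θ j) (hopp : oppositeAngle α ≤ θ j) :
    higherPredecessors θ j ⊆ centralBlockers θ i j α := by
  rintro m ⟨hmj, hm⟩
  rcases lt_or_ge m i with hmi | hmi
  · exact Or.inl ⟨hmi, hα.trans hm.le⟩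
  · exact Or.inr ⟨hmj, by rintro rfl; linarith, hopp.trans hm.le⟩

lemma ncard_radialBlockers_lt_higherPredecessors {i j : Fin n} (hij : i < j) (h : θ j < θ i) :
    (radialBlockers θ i j).ncard < (higherPredecessors θ j).ncard := by
  refine ncard_lt_ncard_of_insert_subset (x := i) (fun hi => lt_irrefl i hi.1) ?_
  rintro m (rfl | ⟨_, hmj, hm⟩)
  · exact ⟨hij, h⟩
  · exact ⟨hmj, by rwa [min_eq_right h.le] at hm⟩

lemma strictMonoOn_ncard_radialBlockers_right (i : Fin n) :
    StrictMonoOn (fun j => (radialBlockers θ i j).ncard) {j | i < j ∧ θ i < θ j} := by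
  rintro j ⟨hij, hj⟩ j' ⟨-, hj'⟩ hjj'
  refine ncard_lt_ncard_of_insert_subset (x := j) (fun h => lt_irrefl j h.2.1) ?_
  rintro m (rfl | ⟨him, hmj, hm⟩)
  · exact ⟨hij, hjj', by rwa [min_eq_left hj'.le]⟩
  · exact ⟨him, hmj.trans hjj', by rwa [min_eq_left hj'.le, ← min_eq_left hj.le]⟩

lemma strictAntiOn_ncard_radialBlockers_left (j : Fin n) :
    StrictAntiOn (fun i => (radialBlockers θ i j).ncard) {i | i < j ∧ θ j < θ i} := by
  rintro i ⟨-, hi⟩ i' ⟨hi'j, hi'⟩ hii'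
  refine ncard_lt_ncard_of_insert_subset (x := i') (fun h => lt_irrefl i' h.1) ?_
  rintro m (rfl | ⟨him, hmj, hm⟩)
  · exact ⟨hii', hi'j, by rwa [min_eq_right hi.le]⟩
  · exact ⟨hii'.trans him, hmj, by rwa [min_eq_right hi.le, ← min_eq_right hi'.le]⟩

lemma strictMonoOn_ncard_centralBlockers_right {i : Fin n} (hi : θ i < π) :
    StrictMonoOn (fun j => (centralBlockers θ i j (θ i)).ncard) {j | i < j ∧ θ i + π ≤ θ j} := by
  rintro j ⟨hij, hj⟩ j' - hjj'
  refine ncard_lt_ncard_of_insert_subset (x := j)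
    (by rintro (⟨h, -⟩ | ⟨h, -, -⟩); exacts [hij.not_gt h, lt_irrefl j h]) ?_
  simp only [centralBlockers, oppositeAngle_of_lt_pi hi]
  rintro m (rfl | ⟨hmi, hm⟩ | ⟨hmj, hmi, hm⟩)
  · exact Or.inr ⟨hjj', hij.ne', hj⟩
  · exact Or.inl ⟨hmi, hm⟩
  · exact Or.inr ⟨hmj.trans hjj', hmi, hm⟩

lemma strictMonoOn_ncard_centralBlockers_left {j : Fin n} (hj : θ j < 2 * π) :
    StrictMonoOn (fun i => (centralBlockers θ i j (θ j - π)).ncard)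
      {i | i < j ∧ θ j - π < θ i ∧ θ i < θ j} := by
  rintro i ⟨-, hi, -⟩ i' ⟨hi'j, -, hi'⟩ hii'
  refine ncard_lt_ncard_of_insert_subset (x := i)
    (by rintro (⟨h, -⟩ | ⟨-, h, -⟩); exacts [lt_irrefl i h, h rfl]) ?_
  simp only [centralBlockers, oppositeAngle_sub_pi hj]
  rintro m (rfl | ⟨hmi, hm⟩ | ⟨hmj, hmi, hm⟩)
  · exact Or.inl ⟨hii', hi.le⟩
  · exact Or.inl ⟨hmi.trans hii', hm⟩
  · rcases lt_or_ge m i' with hmi' | hmi'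
    · exact Or.inl ⟨hmi', by linarith [pi_pos]⟩
    · exact Or.inr ⟨hmj, by rintro rfl; linarith, hm⟩

end Blockers

section Charge

variable {n k : ℕ} {θ : Fin n → ℝ}

def chargedPairs (k : ℕ) (θ : Fin n → ℝ) : Set (Fin n × Fin n) :=
  {p | p.1 < p.2 ∧ semiArcAdj k θ p.1 p.2 ∧
    ¬((radialBlockers θ p.1 p.2).ncard ≤ k ∧ θ p.1 < θ p.2)}

noncomputable def charge (θ : Fin n → ℝ) (i j : Fin n) : Fin n × ℕ :=
  if θ j < θ i then (j, (radialBlockers θ i j).ncard)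
  else if θ i + π ≤ θ j then (i, (centralBlockers θ i j (θ i)).ncard)
  else (j, (centralBlockers θ i j (θ j - π)).ncard)

lemma charge_cases (hinj : Function.Injective θ) (hθ : ∀ m, θ m ∈ Set.Ioo 0 (2 * π))
    {i j : Fin n} (hij : i < j) (hadj : semiArcAdj k θ i j)
    (hup : ¬((radialBlockers θ i j).ncard ≤ k ∧ θ i < θ j)) :
    (θ j < θ i ∧ charge θ i j = (j, (radialBlockers θ i j).ncard) ∧
      (radialBlockers θ i j).ncard ≤ k ∧
      (radialBlockers θ i j).ncard < (higherPredecessors θ j).ncard) ∨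
    (θ i + π ≤ θ j ∧ charge θ i j = (i, (centralBlockers θ i j (θ i)).ncard) ∧
      (centralBlockers θ i j (θ i)).ncard ≤ k ∧
      (higherPredecessors θ i).ncard ≤ (centralBlockers θ i j (θ i)).ncard ∧ θ i < π) ∨
    (θ j - π < θ i ∧ θ i < θ j ∧ charge θ i j = (j, (centralBlockers θ i j (θ j - π)).ncard) ∧
      (centralBlockers θ i j (θ j - π)).ncard ≤ k ∧
      (higherPredecessors θ j).ncard ≤ (centralBlockers θ i j (θ j - π)).ncard ∧ π ≤ θ j) := by
  obtain ⟨hi0, hi2π⟩ := hθ i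
  obtain ⟨hj0, hj2π⟩ := hθ j
  rw [semiArcAdj_iff hi0.le hj2π] at hadj
  rcases (hinj.ne hij.ne').lt_or_gt with hji | hij'
  · refine Or.inl ⟨hji, if_pos hji, ?_, ncard_radialBlockers_lt_higherPredecessors hij hji⟩
    refine hadj.elim id fun ⟨hπ, hC⟩ => le_trans (Set.ncard_le_ncard ?_) hC
    rw [min_eq_right (by linarith)]
    exact radialBlockers_subset_centralBlockers
      (by rw [oppositeAngle_sub_pi hj2π, min_eq_right hji.le])
  obtain ⟨hπ, hC⟩ := hadj.resolve_left fun hR => hup ⟨hR, hij'⟩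
  by_cases hA : θ i + π ≤ θ j
  · rw [min_eq_left (by linarith)] at hC
    refine Or.inr (Or.inl ⟨hA, by rw [charge, if_neg hij'.not_gt, if_pos hA], hC,
      Set.ncard_le_ncard (higherPredecessors_subset_centralBlockers_left le_rfl), by linarith⟩)
  · rw [min_eq_right (by linarith)] at hC
    refine Or.inr (Or.inr ⟨by linarith, hij', by rw [charge, if_neg hij'.not_gt, if_neg hA], hC,
      Set.ncard_le_ncard (higherPredecessors_subset_centralBlockers_right hij' (by linarith)
        (oppositeAngle_sub_pi hj2π).le), hπ⟩)

lemma charge_injOn (hinj : Function.Injective θ) (hθ : ∀ m, θ m ∈ Set.Ioo 0 (2 * π)) :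
    Set.InjOn (fun p : Fin n × Fin n => charge θ p.1 p.2) (chargedPairs k θ) := by
  rintro ⟨i, j⟩ ⟨hij, hp⟩ ⟨i', j'⟩ ⟨hij', hq⟩ h
  dsimp only at hij hij' h
  rcases charge_cases hinj hθ hij hp.1 hp.2 with ⟨hL, hc, -, hD⟩ | ⟨hA, hc, -, hD, hπ⟩ |
      ⟨hB₁, hB₂, hc, -, hD, hπ⟩ <;>
    rcases charge_cases hinj hθ hij' hq.1 hq.2 with ⟨hL', hc', -, hD'⟩ | ⟨hA', hc', -, hD', hπ'⟩ |
      ⟨hB₁', hB₂', hc', -, hD', hπ'⟩ <;>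
    rw [hc, hc', Prod.mk.injEq] at h <;> obtain ⟨rfl, hcount⟩ := h
  all_goals first | omega | (exfalso; linarith) | skip
  · rw [(strictAntiOn_ncard_radialBlockers_left j).injOn ⟨hij, hL⟩ ⟨hij', hL'⟩ hcount]
  · rw [(strictMonoOn_ncard_centralBlockers_right hπ).injOn ⟨hij, hA⟩ ⟨hij', hA'⟩ hcount]
  · rw [(strictMonoOn_ncard_centralBlockers_left (hθ j).2).injOn ⟨hij, hB₁, hB₂⟩
      ⟨hij', hB₁', hB₂'⟩ hcount]

end Charge

section UpperBound

variable {n k : ℕ} {θ : Fin n → ℝ}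

def upwardRadialPairs (k : ℕ) (θ : Fin n → ℝ) : Set (Fin n × Fin n) :=
  {p | p.1 < p.2 ∧ (radialBlockers θ p.1 p.2).ncard ≤ k ∧ θ p.1 < θ p.2}

def radialLabels (k n : ℕ) : Finset (Σ _ : ℕ, ℕ) :=
  (range (k + 1)).sigma fun t => range (n - 1 - t)

lemma two_mul_card_radialLabels (h : k < n) :
    2 * #(radialLabels k n) + (k + 1) * (k + 2) = 2 * n * (k + 1) := by
  rw [radialLabels, card_sigma]
  induction k with
  | zero => simp only [zero_add, sum_range_one, card_range]; omega
  | succ k ih =>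
    have := ih (by omega)
    rw [sum_range_succ, card_range]
    obtain ⟨m, rfl⟩ : ∃ m, n = m + k + 2 := ⟨n - k - 2, by omega⟩
    rw [show m + k + 2 - 1 - (k + 1) = m by omega]
    nlinarith

lemma two_mul_card_radialLabels_add (h : k < n) :
    2 * (#(radialLabels k n) + n * (k + 1)) = (k + 1) * (4 * n - k - 2) := by
  have hsub : (k + 1) * (4 * n - k - 2) + (k + 1) * (k + 2) = 4 * n * (k + 1) := by
    rw [← mul_add, Nat.sub_sub, Nat.sub_add_cancel (by omega), mul_comm]
  nlinarith [two_mul_card_radialLabels h]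

lemma ncard_upwardRadialPairs_le (θ : Fin n → ℝ) :
    (upwardRadialPairs k θ).ncard ≤ #(radialLabels k n) := by
  rw [← Set.ncard_coe_finset]
  refine Set.ncard_le_ncard_of_injOn (fun p => ⟨(radialBlockers θ p.1 p.2).ncard, p.1⟩) ?_ ?_
  · rintro ⟨i, j⟩ ⟨hij, hR, -⟩
    dsimp only at hij hR
    have := ncard_radialBlockers_le (θ := θ) i j
    have := j.isLt
    simp only [radialLabels, coe_sigma, Set.mem_sigma_iff, coe_range, Set.mem_Iio]
    omega
  · rintro ⟨i, j⟩ ⟨hij, -, hj⟩ ⟨i', j'⟩ ⟨hij', -, hj'⟩ h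
    simp only [Sigma.mk.injEq, heq_eq_eq] at h
    obtain rfl := Fin.ext h.2
    exact Prod.ext rfl
      ((strictMonoOn_ncard_radialBlockers_right i).injOn ⟨hij, hj⟩ ⟨hij', hj'⟩ h.1)

lemma ncard_chargedPairs_le (hinj : Function.Injective θ) (hθ : ∀ m, θ m ∈ Set.Ioo 0 (2 * π)) :
    (chargedPairs k θ).ncard ≤ n * (k + 1) := by
  calc _ ≤ ((univ ×ˢ range (k + 1) : Finset (Fin n × ℕ)) : Set (Fin n × ℕ)).ncard := by
        refine Set.ncard_le_ncard_of_injOn (fun p => charge θ p.1 p.2) ?_ (charge_injOn hinj hθ)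
        rintro ⟨i, j⟩ ⟨hij, hadj, hup⟩
        simp only [coe_product, coe_univ, coe_range, Set.mem_prod, Set.mem_univ, Set.mem_Iio,
          true_and]
        rcases charge_cases hinj hθ hij hadj hup with
          ⟨-, hc, hk, -⟩ | ⟨-, hc, hk, -⟩ | ⟨-, -, hc, hk, -⟩ <;> rw [hc] <;> exact Nat.lt_succ_of_le hk
    _ = n * (k + 1) := by simp

theorem two_mul_ncard_edgeSet_le (hk : k < n) (hinj : Function.Injective θ)
    (hθ : ∀ m, θ m ∈ Set.Ioo 0 (2 * π)) :
    2 * (semiArcGraph k θ).edgeSet.ncard ≤ (k + 1) * (4 * n - k - 2) := by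
  have hsplit : {p : Fin n × Fin n | p.1 < p.2 ∧ (semiArcGraph k θ).Adj p.1 p.2} ⊆
      upwardRadialPairs k θ ∪ chargedPairs k θ := by
    rintro p ⟨hlt, hadj⟩
    rw [semiArcGraph_adj_of_lt hlt] at hadj
    by_cases hup : (radialBlockers θ p.1 p.2).ncard ≤ k ∧ θ p.1 < θ p.2
    exacts [Or.inl ⟨hlt, hup⟩, Or.inr ⟨hlt, hadj, hup⟩]
  rw [ncard_edgeSet_eq_ncard_setOf_lt]
  have := (Set.ncard_le_ncard hsplit).trans (Set.ncard_union_le _ _)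
  have := ncard_upwardRadialPairs_le (k := k) θ
  have := ncard_chargedPairs_le (k := k) hinj hθ
  have := two_mul_card_radialLabels_add hk
  omega

end UpperBound

section Construction

variable {n k : ℕ}

/-- In units of `π / (4 n)`: the first `2 k + 2` arcs are short (angle below `π`), the others long
(above `π`); angles increase with the radius, and no two of them differ by exactly `π`. -/
def extremalUnits (k n i : ℕ) : ℕ :=
  if i < 2 * k + 2 then 2 * i + 2 else 2 * i + 4 * n - 4 * k - 3

noncomputable def extremalAngles (k n : ℕ) (i : Fin n) : ℝ :=
  extremalUnits k n i * (π / (4 * n))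

lemma strictMono_extremalUnits (hk : k < n) : StrictMono (extremalUnits k n) := by
  intro i j hij
  unfold extremalUnits
  split_ifs <;> omega

lemma pi_div_pos (hn : 0 < n) : 0 < π / (4 * n) := by
  have : (0 : ℝ) < n := Nat.cast_pos.mpr hn
  positivity

lemma strictMono_extremalAngles (hk : k < n) : StrictMono (extremalAngles k n) := fun _ _ hij =>
  (mul_lt_mul_iff_left₀ (pi_div_pos (show 0 < n by omega))).mpr
    (Nat.cast_lt.mpr (strictMono_extremalUnits hk hij))

lemma natCast_four_mul_mul_pi_div (hn : 0 < n) : ((4 * n : ℕ) : ℝ) * (π / (4 * n)) = π := by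
  have : (n : ℝ) ≠ 0 := Nat.cast_ne_zero.mpr hn.ne'
  push_cast
  field_simp

lemma extremalAngles_mem_Ioo (hk : k < n) (i : Fin n) :
    extremalAngles k n i ∈ Set.Ioo 0 (2 * π) := by
  have hc : 0 < extremalUnits k n i ∧ extremalUnits k n i < 8 * n := by
    unfold extremalUnits
    split_ifs <;> omega
  have hδ := pi_div_pos (show 0 < n by omega)
  have h8 : ((8 * n : ℕ) : ℝ) * (π / (4 * n)) = 2 * π := by
    have := natCast_four_mul_mul_pi_div (show 0 < n by omega)
    push_cast at this ⊢
    linear_combination 2 * this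
  refine ⟨mul_pos (by exact_mod_cast hc.1) hδ, ?_⟩
  rw [extremalAngles, ← h8]
  exact (mul_lt_mul_iff_left₀ hδ).mpr (by exact_mod_cast hc.2)

end Construction

section LowerBound

variable {n k : ℕ}

def IsOrderedEdge (G : SimpleGraph (Fin n)) (q : ℕ × ℕ) : Prop :=
  ∃ (h : q.1 < q.2) (h' : q.2 < n), G.Adj ⟨q.1, h.trans h'⟩ ⟨q.2, h'⟩

lemma card_le_ncard_edgeSet {G : SimpleGraph (Fin n)} {Q : Finset (ℕ × ℕ)}
    (hQ : ∀ q ∈ Q, IsOrderedEdge G q) : #Q ≤ G.edgeSet.ncard := by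
  rw [ncard_edgeSet_eq_ncard_setOf_lt, ← Set.ncard_coe_finset]
  refine (Set.ncard_le_ncard fun q hq => ?_).trans
    (Set.ncard_image_le (f := fun p : Fin n × Fin n => ((p.1 : ℕ), (p.2 : ℕ))))
  obtain ⟨h, h', hadj⟩ := hQ q hq
  exact ⟨(⟨q.1, h.trans h'⟩, ⟨q.2, h'⟩), ⟨h, hadj⟩, rfl⟩

lemma isOrderedEdge_semiArcGraph {θ : Fin n → ℝ} {q : ℕ × ℕ} (h : q.1 < q.2) (h' : q.2 < n)
    (hadj : semiArcAdj k θ ⟨q.1, h.trans h'⟩ ⟨q.2, h'⟩) : IsOrderedEdge (semiArcGraph k θ) q :=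
  ⟨h, h', (semiArcGraph_adj_of_lt h).mpr hadj⟩

def radialPair (x : Σ _ : ℕ, ℕ) : ℕ × ℕ := (x.2, x.2 + x.1 + 1)

lemma isOrderedEdge_radialPair (θ : Fin n → ℝ) {x : Σ _ : ℕ, ℕ} (hx : x ∈ radialLabels k n) :
    IsOrderedEdge (semiArcGraph k θ) (radialPair x) := by
  simp only [radialLabels, mem_sigma, mem_range] at hx
  refine isOrderedEdge_semiArcGraph (by dsimp only [radialPair]; omega)
    (by dsimp only [radialPair]; omega) (Or.inl ((ncard_radialBlockers_le _ _).trans ?_))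
  dsimp only [radialPair]
  omega

lemma semiArcAdj_extremalAngles (hn : 0 < n) {i j : Fin n} (U a : ℕ) (hU : U < 4 * n)
    (hUi : U ≤ extremalUnits k n i) (hUj : U + 4 * n ≤ extremalUnits k n j)
    (hblock : ∀ m < n, (m < i ∧ U ≤ extremalUnits k n m) ∨
      (m < j ∧ m ≠ i ∧ U + 4 * n ≤ extremalUnits k n m) → a ≤ m ∧ m < a + k) :
    semiArcAdj k (extremalAngles k n) i j := by
  have hδ := pi_div_pos hn
  have hπ := natCast_four_mul_mul_pi_div hn
  have hle {b c : ℕ} : (b : ℝ) * (π / (4 * n)) ≤ c * (π / (4 * n)) ↔ b ≤ c := by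
    rw [mul_le_mul_iff_left₀ hδ, Nat.cast_le]
  have hα : (U : ℝ) * (π / (4 * n)) < π :=
    calc (U : ℝ) * (π / (4 * n)) < ((4 * n : ℕ) : ℝ) * (π / (4 * n)) :=
          (mul_lt_mul_iff_left₀ hδ).mpr (by exact_mod_cast hU)
      _ = π := hπ
  have hopp : oppositeAngle (U * (π / (4 * n))) = ((U + 4 * n : ℕ) : ℝ) * (π / (4 * n)) := by
    rw [oppositeAngle_of_lt_pi hα, Nat.cast_add, add_mul, hπ]
  refine Or.inr ⟨U * (π / (4 * n)), by positivity, by linarith [pi_pos], hle.mpr hUi,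
    hopp ▸ hle.mpr hUj, ?_⟩
  refine (ncard_le_sub_of_forall_mem_Ico (a := a) (b := a + k) fun m hm => hblock m m.isLt ?_).trans
    (by omega)
  simp only [Set.mem_ofPred_eq, hopp, extremalAngles, hle] at hm
  rcases hm with ⟨hmi, hm⟩ | ⟨hmj, hmi, hm⟩
  exacts [Or.inl ⟨hmi, hm⟩, Or.inr ⟨hmj, Fin.val_ne_iff.mpr hmi, hm⟩]

/-- `(v, t)` with `t ≤ k` gives the extremal edge charged to `v` with `t` blockers: for a short
arc `v` its line of sight through the center leaves at `α = θ v`, for a long one at `θ v - π`. -/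
def centralPair (k : ℕ) (p : ℕ × ℕ) : ℕ × ℕ :=
  if p.1 < 2 * k + 2 then (p.1, p.1 + 2 * k + 3 + p.2)
  else (min (p.1 - (2 * k + 2)) (2 * k + 2) + p.2, p.1)

lemma isOrderedEdge_centralPair (hn : 5 * k + 5 ≤ n) {p : ℕ × ℕ}
    (hp : p ∈ range n ×ˢ range (k + 1)) :
    IsOrderedEdge (semiArcGraph k (extremalAngles k n)) (centralPair k p) := by
  obtain ⟨v, t⟩ := p
  simp only [mem_product, mem_range] at hp
  unfold centralPair
  split_ifs with hv
  · refine isOrderedEdge_semiArcGraph (by dsimp only; omega) (by dsimp only; omega)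
      (semiArcAdj_extremalAngles (by omega) (2 * v + 2) (v + 2 * k + 3) (by omega) ?_ ?_ ?_) <;>
      simp only [extremalUnits]
    · split_ifs <;> omega
    · split_ifs <;> omega
    · intro m hm h
      split_ifs at h <;> omega
  · refine isOrderedEdge_semiArcGraph (by dsimp only; omega) (by dsimp only; omega)
      (semiArcAdj_extremalAngles (by omega) (2 * v - 4 * k - 3) (min (v - (2 * k + 2)) (2 * k + 2))
        (by omega) ?_ ?_ ?_) <;>
      simp only [extremalUnits]
    · split_ifs <;> omega
    · split_ifs <;> omega
    · intro m hm h
      split_ifs at h <;> omega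

lemma injOn_centralPair : Set.InjOn (centralPair k) ↑(range n ×ˢ range (k + 1)) := by
  rintro ⟨v, t⟩ hp ⟨v', t'⟩ hq h
  simp only [coe_product, coe_range, Set.mem_prod, Set.mem_Iio] at hp hq
  unfold centralPair at h
  split_ifs at h <;> simp only [Prod.mk.injEq] at h ⊢ <;> omega

theorem le_two_mul_ncard_edgeSet_extremalAngles (hn : 5 * k + 5 ≤ n) :
    (k + 1) * (4 * n - k - 2) ≤ 2 * (semiArcGraph k (extremalAngles k n)).edgeSet.ncard := by
  have hdisj : Disjoint ((radialLabels k n).image radialPair)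
      ((range n ×ˢ range (k + 1)).image (centralPair k)) := by
    simp only [disjoint_left, mem_image, mem_product, mem_range, not_exists, not_and]
    rintro _ ⟨x, hx, rfl⟩ ⟨v, t⟩ ⟨-, ht⟩ h
    simp only [radialLabels, mem_sigma, mem_range] at hx
    unfold centralPair radialPair at h
    split_ifs at h <;> simp only [Prod.mk.injEq] at h <;> omega
  have hinj : Function.Injective radialPair := by
    rintro ⟨t, i⟩ ⟨t', i'⟩ h
    simp only [radialPair, Prod.mk.injEq] at h
    obtain ⟨rfl, h⟩ := h
    obtain rfl : t = t' := by omega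
    rfl
  have hcard := card_le_ncard_edgeSet (G := semiArcGraph k (extremalAngles k n))
    (Q := (radialLabels k n).image radialPair ∪ (range n ×ˢ range (k + 1)).image (centralPair k))
    (by
      simp only [mem_union, mem_image]
      rintro _ (⟨x, hx, rfl⟩ | ⟨p, hp, rfl⟩)
      exacts [isOrderedEdge_radialPair _ hx, isOrderedEdge_centralPair hn hp])
  rw [card_union_of_disjoint hdisj, card_image_of_injective _ hinj,
    card_image_of_injOn injOn_centralPair, card_product, card_range, card_range] at hcard
  have := two_mul_card_radialLabels_add (show k < n by omega)
  omega

end LowerBound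

end SemiArc

open SemiArc

/-- The maximum number of edges in a semi-arc `k`-visibility graph with
`n ≥ 5k + 5` vertices is `(k+1)(2n - (k+2)/2) = (k+1)(4n - k - 2)/2`, and this
bound is optimal.  (Stated multiplied by 2 to avoid division.) -/
theorem semiArc_k_visibility_max_edges (k n : ℕ) (hn : 5 * k + 5 ≤ n) :
    (∀ θ : Fin n → ℝ, Function.Injective θ →
        (∀ i, θ i ∈ Set.Ioo (0 : ℝ) (2 * π)) →
        2 * (semiArcGraph k θ).edgeSet.ncard ≤ (k + 1) * (4 * n - k - 2)) ∧
    (∃ θ : Fin n → ℝ, Function.Injective θ ∧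
        (∀ i, θ i ∈ Set.Ioo (0 : ℝ) (2 * π)) ∧
        2 * (semiArcGraph k θ).edgeSet.ncard = (k + 1) * (4 * n - k - 2)) := by
  have hk : k < n := by omega
  refine ⟨fun θ hinj hθ => two_mul_ncard_edgeSet_le hk hinj hθ, extremalAngles k n,
    (strictMono_extremalAngles hk).injective, extremalAngles_mem_Ioo hk, ?_⟩
  exact le_antisymm
    (two_mul_ncard_edgeSet_le hk (strictMono_extremalAngles hk).injective
      (extremalAngles_mem_Ioo hk))
    (le_two_mul_ncard_edgeSet_extremalAngles hn)
end

section
/- For every integer k ≥ 0, the complete graph K_{3k+4} is a semi-arc k-visibility graph; that is, there exist distinct angles θ_1, …, θ_{3k+4} ∈ (0, 2π) whose semi-arc k-visibility graph is the complete graph on 3k+4 vertices. -/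
open Real

/-! ### Auxiliary construction -/

/-- A small positive constant. -/
noncomputable def saC (k : ℕ) : ℝ := (100 * ((k : ℝ) + 2))⁻¹

/-- The angles of the representation: `k+2` arcs near `1/2`, then `k+1` arcs
just above `π`, then `k+1` arcs near `π + 1`. -/
noncomputable def saTheta (k : ℕ) (m : Fin (3 * k + 4)) : ℝ :=
  if m.val ≤ k + 1 then 1 / 2 + ((m.val : ℝ) + 1) * saC k
  else if m.val ≤ 2 * k + 2 then π + ((m.val : ℝ) - ((k : ℝ) + 1)) * saC k ^ 2
  else π + 1 + ((m.val : ℝ) - (2 * (k : ℝ) + 2)) * saC k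

lemma saC_pos (k : ℕ) : 0 < saC k := by
  unfold saC
  positivity

lemma saC_mul (k : ℕ) : ((k : ℝ) + 2) * saC k = 1 / 100 := by
  unfold saC
  have h : (100 : ℝ) * ((k : ℝ) + 2) ≠ 0 := by positivity
  field_simp

lemma saC_le (k : ℕ) : saC k ≤ 1 / 200 := by
  unfold saC
  rw [show (1 : ℝ) / 200 = ((200 : ℝ))⁻¹ by norm_num]
  apply inv_anti₀ (by norm_num)
  have : (0 : ℝ) ≤ (k : ℝ) := Nat.cast_nonneg k
  linarith

lemma saTheta_S (k : ℕ) (m : Fin (3 * k + 4)) (h : m.val ≤ k + 1) :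
    1 / 2 < saTheta k m ∧ saTheta k m ≤ 1 / 2 + 1 / 100 := by
  have hv : ((m.val : ℝ) + 1) ≥ 1 := by
    have : (0 : ℝ) ≤ (m.val : ℝ) := Nat.cast_nonneg _
    linarith
  have hv2 : ((m.val : ℝ) + 1) ≤ (k : ℝ) + 2 := by
    have : (m.val : ℝ) ≤ (k : ℝ) + 1 := by exact_mod_cast h
    linarith
  have hc := saC_pos k
  have hm := saC_mul k
  unfold saTheta
  rw [if_pos h]
  constructor
  · nlinarith
  · nlinarith

lemma saTheta_M (k : ℕ) (m : Fin (3 * k + 4)) (h1 : k + 2 ≤ m.val) (h2 : m.val ≤ 2 * k + 2) :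
    π < saTheta k m ∧ saTheta k m ≤ π + 1 / 200 := by
  have hv : (1 : ℝ) ≤ (m.val : ℝ) - ((k : ℝ) + 1) := by
    have : ((k : ℝ) + 2) ≤ (m.val : ℝ) := by exact_mod_cast h1
    linarith
  have hv2 : (m.val : ℝ) - ((k : ℝ) + 1) ≤ (k : ℝ) + 1 := by
    have : (m.val : ℝ) ≤ 2 * (k : ℝ) + 2 := by exact_mod_cast h2
    linarith
  have hc := saC_pos k
  have hm := saC_mul k
  have hle := saC_le k
  unfold saTheta
  rw [if_neg (by omega), if_pos h2]
  constructor
  · nlinarith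
  · nlinarith [sq_nonneg (saC k)]

lemma saTheta_L (k : ℕ) (m : Fin (3 * k + 4)) (h : 2 * k + 3 ≤ m.val) :
    π + 1 < saTheta k m ∧ saTheta k m ≤ π + 1 + 1 / 100 := by
  have hv : (1 : ℝ) ≤ (m.val : ℝ) - (2 * (k : ℝ) + 2) := by
    have : (2 * (k : ℝ) + 3) ≤ (m.val : ℝ) := by exact_mod_cast h
    linarith
  have hv2 : (m.val : ℝ) - (2 * (k : ℝ) + 2) ≤ (k : ℝ) + 2 := by
    have hlt : m.val ≤ 3 * k + 3 := by omega
    have : (m.val : ℝ) ≤ 3 * (k : ℝ) + 3 := by exact_mod_cast hlt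
    have hk : (0 : ℝ) ≤ (k : ℝ) := Nat.cast_nonneg k
    linarith
  have hc := saC_pos k
  have hm := saC_mul k
  unfold saTheta
  rw [if_neg (by omega), if_neg (by omega)]
  constructor
  · nlinarith
  · nlinarith

lemma saTheta_strictMono (k : ℕ) : StrictMono (saTheta k) := by
  intro a b hab
  have hab' : a.val < b.val := hab
  have hb4 : b.val < 3 * k + 4 := b.isLt
  have hpi := Real.pi_gt_three
  have hc := saC_pos k
  have hm := saC_mul k
  have hle := saC_le k
  rcases le_or_gt a.val (k + 1) with ha1 | ha1
  · rcases le_or_gt b.val (k + 1) with hb1 | hb1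
    · have hSa := saTheta_S k a ha1
      have hSb := saTheta_S k b hb1
      have hcast : (a.val : ℝ) < (b.val : ℝ) := by exact_mod_cast hab'
      unfold saTheta
      rw [if_pos ha1, if_pos hb1]
      nlinarith
    · have hSa := saTheta_S k a ha1
      rcases le_or_gt b.val (2 * k + 2) with hb2 | hb2
      · have hMb := saTheta_M k b (by omega) hb2
        linarith [hSa.2, hMb.1]
      · have hLb := saTheta_L k b (by omega)
        linarith [hSa.2, hLb.1]
  · rcases le_or_gt a.val (2 * k + 2) with ha2 | ha2
    · have hMa := saTheta_M k a (by omega) ha2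
      rcases le_or_gt b.val (2 * k + 2) with hb2 | hb2
      · have hcast : (a.val : ℝ) < (b.val : ℝ) := by exact_mod_cast hab'
        unfold saTheta
        rw [if_neg (by omega), if_pos ha2, if_neg (by omega), if_pos hb2]
        nlinarith [sq_nonneg (saC k), pow_pos hc 2]
      · have hLb := saTheta_L k b (by omega)
        linarith [hMa.2, hLb.1]
    · have hLa := saTheta_L k a (by omega)
      have hb2 : 2 * k + 3 ≤ b.val := by omega
      have hcast : (a.val : ℝ) < (b.val : ℝ) := by exact_mod_cast hab'
      unfold saTheta
      rw [if_neg (by omega), if_neg (by omega), if_neg (by omega), if_neg (by omega)]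
      nlinarith

lemma saTheta_mem (k : ℕ) (m : Fin (3 * k + 4)) :
    saTheta k m ∈ Set.Ioo (0 : ℝ) (2 * π) := by
  have hpi := Real.pi_gt_three
  rcases le_or_gt m.val (k + 1) with h1 | h1
  · have hS := saTheta_S k m h1
    constructor <;> [linarith [hS.1]; linarith [hS.2]]
  · rcases le_or_gt m.val (2 * k + 2) with h2 | h2
    · have hM := saTheta_M k m (by omega) h2
      constructor <;> [linarith [hM.1]; linarith [hM.2]]
    · have hL := saTheta_L k m (by omega)
      constructor <;> [linarith [hL.1]; linarith [hL.2]]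

lemma saAdj (k : ℕ) (i j : Fin (3 * k + 4)) (hij : i < j) :
    semiArcAdj k (saTheta k) i j := by
  have hij' : i.val < j.val := hij
  have hj4 : j.val < 3 * k + 4 := j.isLt
  have hpi := Real.pi_gt_three
  have hmono := saTheta_strictMono k
  rcases le_or_gt j.val (i.val + k + 1) with hnear | hfar
  · -- condition (a): at most `k` intervening arcs
    left
    have hsub : {m : Fin (3 * k + 4) | i < m ∧ m < j ∧
        min (saTheta k i) (saTheta k j) < saTheta k m} ⊆ ↑(Finset.Ioo i j) := by
      intro m hm
      simp only [Finset.coe_Ioo, Set.mem_Ioo]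
      exact ⟨hm.1, hm.2.1⟩
    calc ({m : Fin (3 * k + 4) | i < m ∧ m < j ∧
            min (saTheta k i) (saTheta k j) < saTheta k m}).ncard
        ≤ (↑(Finset.Ioo i j) : Set (Fin (3 * k + 4))).ncard :=
          Set.ncard_le_ncard hsub (Set.toFinite _)
      _ = (Finset.Ioo i j).card := Set.ncard_coe_finset _
      _ = j.val - i.val - 1 := Fin.card_Ioo i j
      _ ≤ k := by omega
  · right
    rcases le_or_gt j.val (2 * k + 2) with hjM | hjL
    · -- Case 1 : `i` in S, `j` in M; take `α = θ j - π`
      have hiS : i.val ≤ k + 1 := by omega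
      have hS := saTheta_S k i hiS
      have hM := saTheta_M k j (by omega) hjM
      refine ⟨saTheta k j - π, by linarith [hM.1], by linarith [hM.2], by linarith [hS.1, hM.2], ?_⟩
      have hopp : oppositeAngle (saTheta k j - π) = saTheta k j := by
        unfold oppositeAngle
        rw [if_pos (by linarith [hM.2])]
        ring
      rw [hopp]
      refine ⟨le_refl _, ?_⟩
      have hsub : {m : Fin (3 * k + 4) | (m < i ∧ saTheta k j - π ≤ saTheta k m) ∨
          (m < j ∧ m ≠ i ∧ saTheta k j ≤ saTheta k m)} ⊆ ↑(Finset.Iio i) := by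
        intro m hm
        rcases hm with ⟨h1, _⟩ | ⟨h2, _, hβ⟩
        · simpa using h1
        · exact absurd (hmono h2) (by linarith)
      calc ({m : Fin (3 * k + 4) | (m < i ∧ saTheta k j - π ≤ saTheta k m) ∨
              (m < j ∧ m ≠ i ∧ saTheta k j ≤ saTheta k m)}).ncard
          ≤ (↑(Finset.Iio i) : Set (Fin (3 * k + 4))).ncard :=
            Set.ncard_le_ncard hsub (Set.toFinite _)
        _ = (Finset.Iio i).card := Set.ncard_coe_finset _
        _ = i.val := Fin.card_Iio i
        _ ≤ k := by omega
    · rcases le_or_gt i.val (k + 1) with hiS | hiM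
      · -- Case 2 : `i` in S, `j` in L; take `α = θ i`
        have hS := saTheta_S k i hiS
        have hL := saTheta_L k j (by omega)
        refine ⟨saTheta k i, by linarith [hS.1], by linarith [hS.2], le_refl _, ?_⟩
        have hopp : oppositeAngle (saTheta k i) = saTheta k i + π := by
          unfold oppositeAngle
          rw [if_pos (by linarith [hS.2])]
        rw [hopp]
        refine ⟨by linarith [hS.2, hL.1], ?_⟩
        have hsub : {m : Fin (3 * k + 4) | (m < i ∧ saTheta k i ≤ saTheta k m) ∨
            (m < j ∧ m ≠ i ∧ saTheta k i + π ≤ saTheta k m)} ⊆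
            ↑(Finset.Ico (⟨2 * k + 3, by omega⟩ : Fin (3 * k + 4)) j) := by
          intro m hm
          rcases hm with ⟨h1, hα⟩ | ⟨h2, _, hβ⟩
          · exact absurd (hmono h1) (by linarith)
          · simp only [Finset.coe_Ico, Set.mem_Ico]
            refine ⟨?_, h2⟩
            rw [Fin.le_def]
            simp only
            by_contra hcon
            have hm2 : m.val ≤ 2 * k + 2 := by omega
            rcases le_or_gt m.val (k + 1) with hm1 | hm1
            · have hSm := saTheta_S k m hm1
              linarith [hS.1, hSm.2]
            · have hMm := saTheta_M k m (by omega) hm2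
              linarith [hS.1, hMm.2]
        calc ({m : Fin (3 * k + 4) | (m < i ∧ saTheta k i ≤ saTheta k m) ∨
                (m < j ∧ m ≠ i ∧ saTheta k i + π ≤ saTheta k m)}).ncard
            ≤ (↑(Finset.Ico (⟨2 * k + 3, by omega⟩ : Fin (3 * k + 4)) j) :
                Set (Fin (3 * k + 4))).ncard :=
              Set.ncard_le_ncard hsub (Set.toFinite _)
          _ = (Finset.Ico (⟨2 * k + 3, by omega⟩ : Fin (3 * k + 4)) j).card :=
              Set.ncard_coe_finset _
          _ = j.val - (2 * k + 3) := Fin.card_Ico _ j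
          _ ≤ k := by omega
      · -- Case 3 : `i` in M, `j` in L; take `α = θ j - π`
        have hiM2 : i.val ≤ 2 * k + 1 := by omega
        have hMi := saTheta_M k i (by omega) (by omega)
        have hL := saTheta_L k j (by omega)
        refine ⟨saTheta k j - π, by linarith [hL.1], by linarith [hL.2],
          by linarith [hMi.1, hL.2], ?_⟩
        have hopp : oppositeAngle (saTheta k j - π) = saTheta k j := by
          unfold oppositeAngle
          rw [if_pos (by linarith [hL.2])]
          ring
        rw [hopp]
        refine ⟨le_refl _, ?_⟩
        have hsub : {m : Fin (3 * k + 4) | (m < i ∧ saTheta k j - π ≤ saTheta k m) ∨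
            (m < j ∧ m ≠ i ∧ saTheta k j ≤ saTheta k m)} ⊆
            ↑(Finset.Ico (⟨k + 2, by omega⟩ : Fin (3 * k + 4)) i) := by
          intro m hm
          rcases hm with ⟨h1, hα⟩ | ⟨h2, _, hβ⟩
          · simp only [Finset.coe_Ico, Set.mem_Ico]
            refine ⟨?_, h1⟩
            rw [Fin.le_def]
            simp only
            by_contra hcon
            have hSm := saTheta_S k m (by omega)
            linarith [hSm.2, hL.1]
          · exact absurd (hmono h2) (by linarith)
        calc ({m : Fin (3 * k + 4) | (m < i ∧ saTheta k j - π ≤ saTheta k m) ∨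
                (m < j ∧ m ≠ i ∧ saTheta k j ≤ saTheta k m)}).ncard
            ≤ (↑(Finset.Ico (⟨k + 2, by omega⟩ : Fin (3 * k + 4)) i) :
                Set (Fin (3 * k + 4))).ncard :=
              Set.ncard_le_ncard hsub (Set.toFinite _)
          _ = (Finset.Ico (⟨k + 2, by omega⟩ : Fin (3 * k + 4)) i).card :=
              Set.ncard_coe_finset _
          _ = i.val - (k + 2) := Fin.card_Ico _ i
          _ ≤ k := by omega

/-- `K_{3k+4}` is a semi-arc `k`-visibility graph: there is a semi-arc
`k`-visibility representation on `3k+4` vertices whose graph is complete. -/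
theorem completeGraph_is_semiArc_k_visibility (k : ℕ) :
    ∃ θ : Fin (3 * k + 4) → ℝ, Function.Injective θ ∧
      (∀ i, θ i ∈ Set.Ioo (0 : ℝ) (2 * π)) ∧
      semiArcGraph k θ = ⊤ := by
  refine ⟨saTheta k, (saTheta_strictMono k).injective, saTheta_mem k, ?_⟩
  ext i j
  simp only [semiArcGraph, SimpleGraph.fromRel_adj, SimpleGraph.top_adj]
  constructor
  · rintro ⟨hne, _⟩
    exact hne
  · intro hne
    refine ⟨hne, ?_⟩
    rcases lt_or_gt_of_ne hne with h | h
    · exact Or.inl ⟨h, saAdj k i j h⟩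
    · exact Or.inr ⟨h, saAdj k j i h⟩
end

section
/- Let k ≥ 0 be an integer and let G be a finite simple graph containing no clique of size k+2 (i.e., G is K_{k+2}-free). Then G is an interval graph if and only if G is a bar k-visibility graph. -/
/-!
On a vertical line, a line of sight between two of the lowest `k + 2` bars met by the line
crosses only other bars among these, so those bars form a clique. Hence in a `K_{k+2}`-free bar
`k`-visibility graph each vertical line meets at most `k + 1` bars, and two bars see each other
exactly when their horizontal extents intersect: the graph is the interval graph of the bars.
Conversely, the intervals of an interval graph, lengthened by less than the smallest gap between
two disjoint ones and stacked at distinct heights, are bars whose `k`-visibility graph is a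
subgraph of the interval graph, hence `K_{k+2}`-free, hence equal to it.
-/

/-- Adjacency (before symmetrization) in the bar `k`-visibility representation
with bars `[l i, r i] × {y i}`: there is a vertical line of sight at abscissa `x`
between bars `i` and `j` crossing at most `k` intervening bars. -/
def barAdj (k : ℕ) {n : ℕ} (l r y : Fin n → ℝ) (i j : Fin n) : Prop :=
  ∃ x : ℝ, l i ≤ x ∧ x ≤ r i ∧ l j ≤ x ∧ x ≤ r j ∧
    ({m : Fin n | min (y i) (y j) < y m ∧ y m < max (y i) (y j) ∧
        l m ≤ x ∧ x ≤ r m}.ncard ≤ k)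

/-- The bar `k`-visibility graph of the representation `(l, r, y)`. -/
def barGraph (k : ℕ) {n : ℕ} (l r y : Fin n → ℝ) : SimpleGraph (Fin n) :=
  SimpleGraph.fromRel (barAdj k l r y)

/-- A graph is a bar `k`-visibility graph if it is isomorphic to the bar
`k`-visibility graph of some representation: finitely many nondegenerate bars
at pairwise distinct heights. -/
def IsBarKVisibilityGraph (k : ℕ) {V : Type*} (G : SimpleGraph V) : Prop :=
  ∃ (n : ℕ) (l r y : Fin n → ℝ), (∀ i, l i < r i) ∧ Function.Injective y ∧
    Nonempty (G ≃g barGraph k l r y)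

/-- `G` is an interval graph: each vertex can be assigned a nonempty closed real
interval so that distinct vertices are adjacent iff their intervals intersect. -/
def IsIntervalGraph {V : Type*} (G : SimpleGraph V) : Prop :=
  ∃ a b : V → ℝ, (∀ v, a v ≤ b v) ∧
    ∀ u v : V, u ≠ v →
      (G.Adj u v ↔ ((Set.Icc (a u) (b u)) ∩ (Set.Icc (a v) (b v))).Nonempty)

open Set Topology

section IntervalGraph

variable {V : Type*}

def intervalGraph (a b : V → ℝ) : SimpleGraph V :=
  SimpleGraph.fromRel fun u v => (Icc (a u) (b u) ∩ Icc (a v) (b v)).Nonempty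

lemma intervalGraph_adj {a b : V → ℝ} {u v : V} :
    (intervalGraph a b).Adj u v ↔ u ≠ v ∧ (Icc (a u) (b u) ∩ Icc (a v) (b v)).Nonempty := by
  rw [intervalGraph, SimpleGraph.fromRel_adj, inter_comm (Icc (a v) _), or_self]

lemma isIntervalGraph_intervalGraph {a b : V → ℝ} (hab : ∀ v, a v ≤ b v) :
    IsIntervalGraph (intervalGraph a b) :=
  ⟨a, b, hab, fun _ _ huv => by rw [intervalGraph_adj, and_iff_right huv]⟩

lemma IsIntervalGraph.of_iso {W : Type*} {G : SimpleGraph V} {H : SimpleGraph W}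
    (hH : IsIntervalGraph H) (e : G ≃g H) : IsIntervalGraph G := by
  obtain ⟨a, b, hab, hadj⟩ := hH
  exact ⟨a ∘ e, b ∘ e, fun v => hab (e v), fun u v huv =>
    e.map_adj_iff.symm.trans (hadj _ _ (e.injective.ne huv))⟩

lemma Icc_inter_Icc_nonempty_iff {α : Type*} [LinearOrder α] {a₁ b₁ a₂ b₂ : α}
    (h₁ : a₁ ≤ b₁) (h₂ : a₂ ≤ b₂) :
    (Icc a₁ b₁ ∩ Icc a₂ b₂).Nonempty ↔ a₁ ≤ b₂ ∧ a₂ ≤ b₁ := by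
  simp [Icc_inter_Icc, h₁, h₂, and_comm]

lemma exists_pos_forall_le_add_imp_le {ι κ : Type*} [Finite ι] [Finite κ] (a : ι → ℝ)
    (b : κ → ℝ) : ∃ ε > 0, ∀ i j, a i ≤ b j + ε → a i ≤ b j := by
  have : ∀ᶠ ε in 𝓝[>] (0 : ℝ), ∀ i j, a i ≤ b j + ε → a i ≤ b j := by
    refine Filter.eventually_all.2 fun i => Filter.eventually_all.2 fun j => ?_
    rcases le_or_gt (a i) (b j) with h | h
    · exact Filter.Eventually.of_forall fun _ _ => h
    · filter_upwards [nhdsWithin_le_nhds (eventually_lt_nhds (sub_pos.2 h))] with ε hε hle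
      linarith
  obtain ⟨ε, hgap, hε⟩ := (this.and self_mem_nhdsWithin).exists
  exact ⟨ε, hε, hgap⟩

lemma IsIntervalGraph.exists_eq_intervalGraph [Finite V] {G : SimpleGraph V}
    (hG : IsIntervalGraph G) : ∃ a b : V → ℝ, (∀ v, a v < b v) ∧ G = intervalGraph a b := by
  obtain ⟨a, b, hab, hadj⟩ := hG
  obtain ⟨ε, hε, hgap⟩ := exists_pos_forall_le_add_imp_le a b
  have hlt : ∀ v, a v < b v + ε := fun v => by linarith [hab v]
  refine ⟨a, fun v => b v + ε, hlt, ?_⟩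
  ext u v
  rw [intervalGraph_adj, Icc_inter_Icc_nonempty_iff (hlt u).le (hlt v).le]
  by_cases huv : u = v
  · simp [huv]
  rw [hadj u v huv, Icc_inter_Icc_nonempty_iff (hab u) (hab v)]
  constructor
  · rintro ⟨h₁, h₂⟩
    exact ⟨huv, by linarith, by linarith⟩
  · rintro ⟨-, h₁, h₂⟩
    exact ⟨hgap _ _ h₁, hgap _ _ h₂⟩

end IntervalGraph

lemma Finset.exists_subset_card_eq_forall_lt_mem {ι β : Type*} [DecidableEq ι] [LinearOrder β]
    (f : ι → β) {S : Finset ι} {m : ℕ} (hm : m ≤ S.card) :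
    ∃ T ⊆ S, T.card = m ∧ ∀ s ∈ S, ∀ t ∈ T, f s < f t → s ∈ T := by
  induction m with
  | zero => exact ⟨∅, empty_subset _, rfl, by simp⟩
  | succ m ih =>
    obtain ⟨T, hTS, hTcard, hT⟩ := ih (Nat.le_of_succ_le hm)
    have hne : (S \ T).Nonempty := by
      rw [← Finset.card_pos, Finset.card_sdiff_of_subset hTS]
      omega
    obtain ⟨s₀, hs₀, hmin⟩ := (S \ T).exists_min_image f hne
    rw [Finset.mem_sdiff] at hs₀
    refine ⟨insert s₀ T, Finset.insert_subset hs₀.1 hTS, by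
      rw [Finset.card_insert_of_notMem hs₀.2, hTcard], fun s hs t ht hst => ?_⟩
    by_contra hsT
    have hsT' : s ∉ T := fun h => hsT (Finset.mem_insert_of_mem h)
    rcases Finset.mem_insert.1 ht with rfl | htT
    · exact (hmin s (Finset.mem_sdiff.2 ⟨hs, hsT'⟩)).not_gt hst
    · exact hsT' (hT s hs t htT hst)

section Bars

variable {k n : ℕ} {l r y : Fin n → ℝ}

lemma barAdj_symm {i j : Fin n} (h : barAdj k l r y i j) : barAdj k l r y j i := by
  obtain ⟨x, h₁, h₂, h₃, h₄, hcard⟩ := h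
  exact ⟨x, h₃, h₄, h₁, h₂, by rwa [min_comm, max_comm]⟩

lemma barGraph_adj {i j : Fin n} :
    (barGraph k l r y).Adj i j ↔ i ≠ j ∧ barAdj k l r y i j := by
  rw [barGraph, SimpleGraph.fromRel_adj, or_iff_left_of_imp barAdj_symm]

lemma barGraph_le_intervalGraph : barGraph k l r y ≤ intervalGraph l r := by
  intro i j h
  obtain ⟨hij, x, h₁, h₂, h₃, h₄, -⟩ := barGraph_adj.1 h
  exact intervalGraph_adj.2 ⟨hij, x, ⟨h₁, h₂⟩, h₃, h₄⟩

noncomputable def barsAt (l r : Fin n → ℝ) (x : ℝ) : Finset (Fin n) :=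
  {m | x ∈ Icc (l m) (r m)}

lemma mem_barsAt {x : ℝ} {m : Fin n} : m ∈ barsAt l r x ↔ x ∈ Icc (l m) (r m) := by
  simp [barsAt]

lemma barAdj_of_mem {x : ℝ} {T : Finset (Fin n)} (hT : T ⊆ barsAt l r x)
    (hlow : ∀ m ∈ barsAt l r x, ∀ t ∈ T, y m < y t → m ∈ T) (hcard : T.card ≤ k + 2)
    {i j : Fin n} (hi : i ∈ T) (hj : j ∈ T) (hij : i ≠ j) : barAdj k l r y i j := by
  obtain ⟨hli, hri⟩ := mem_barsAt.1 (hT hi)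
  obtain ⟨hlj, hrj⟩ := mem_barsAt.1 (hT hj)
  refine ⟨x, hli, hri, hlj, hrj, ?_⟩
  have hsub : {m | min (y i) (y j) < y m ∧ y m < max (y i) (y j) ∧ l m ≤ x ∧ x ≤ r m} ⊆
      ↑((T.erase i).erase j) := by
    rintro m ⟨hmin, hmax, hlm, hrm⟩
    have hm : m ∈ barsAt l r x := mem_barsAt.2 ⟨hlm, hrm⟩
    have hmT : m ∈ T := (lt_max_iff.1 hmax).elim (hlow m hm i hi) (hlow m hm j hj)
    simp only [Finset.coe_erase, mem_sdiff, Finset.mem_coe, mem_singleton_iff]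
    refine ⟨⟨hmT, ?_⟩, ?_⟩ <;> rintro rfl <;> grind
  calc _ ≤ ((T.erase i).erase j).card := (ncard_le_ncard hsub).trans_eq (ncard_coe_finset _)
    _ ≤ k := by
      rw [Finset.card_erase_of_mem (Finset.mem_erase.2 ⟨hij.symm, hj⟩),
        Finset.card_erase_of_mem hi]
      omega

lemma card_barsAt_le (hfree : (barGraph k l r y).CliqueFree (k + 2)) (x : ℝ) :
    (barsAt l r x).card ≤ k + 1 := by
  by_contra! h
  obtain ⟨T, hTS, hTcard, hT⟩ := (barsAt l r x).exists_subset_card_eq_forall_lt_mem y h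
  exact hfree T ⟨fun i hi j hj hij =>
    barGraph_adj.2 ⟨hij, barAdj_of_mem hTS hT hTcard.le hi hj hij⟩, hTcard⟩

lemma barGraph_eq_intervalGraph (hfree : (barGraph k l r y).CliqueFree (k + 2)) :
    barGraph k l r y = intervalGraph l r := by
  refine le_antisymm barGraph_le_intervalGraph fun i j h => ?_
  obtain ⟨hij, x, hi, hj⟩ := intervalGraph_adj.1 h
  have hcard : (barsAt l r x).card ≤ k + 2 := (card_barsAt_le hfree x).trans (Nat.le_succ _)
  exact barGraph_adj.2 ⟨hij, barAdj_of_mem subset_rfl (fun m hm _ _ _ => hm) hcard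
    (mem_barsAt.2 hi) (mem_barsAt.2 hj) hij⟩

end Bars

/-- A `K_{k+2}`-free finite simple graph is an interval graph if and only if it
is a bar `k`-visibility graph. -/
theorem intervalGraph_iff_bar_k_visibility (k : ℕ) {V : Type*} [Fintype V]
    (G : SimpleGraph V) (hfree : G.CliqueFree (k + 2)) :
    IsIntervalGraph G ↔ IsBarKVisibilityGraph k G := by
  constructor
  · intro hG
    obtain ⟨a, b, hab, rfl⟩ := hG.exists_eq_intervalGraph
    let e := Fintype.equivFin V
    let e' : intervalGraph a b ≃g intervalGraph (a ∘ e.symm) (b ∘ e.symm) :=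
      ⟨e, by simp [intervalGraph_adj]⟩
    let y : Fin (Fintype.card V) → ℝ := fun i => (i : ℕ)
    have hfree' : (barGraph k (a ∘ e.symm) (b ∘ e.symm) y).CliqueFree (k + 2) :=
      (hfree.comap e'.isContained').anti barGraph_le_intervalGraph
    refine ⟨_, a ∘ e.symm, b ∘ e.symm, y, fun i => hab _,
      Nat.cast_injective.comp Fin.val_injective, ⟨?_⟩⟩
    rwa [barGraph_eq_intervalGraph hfree']
  · rintro ⟨n, l, r, y, hlr, -, ⟨e⟩⟩
    rw [barGraph_eq_intervalGraph (hfree.comap e.isContained')] at e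
    exact (isIntervalGraph_intervalGraph fun i => (hlr i).le).of_iso e
end

section
/- For every integer i ≥ 1, the cycle C_4 on four vertices is not a bar i-visibility graph: no bar i-visibility representation has a bar i-visibility graph isomorphic to C_4. -/
/-- Overlap of the `x`-intervals of bars `i` and `j`. -/
def ov {n : ℕ} (l r : Fin n → ℝ) (i j : Fin n) : Prop :=
  ∃ x : ℝ, l i ≤ x ∧ x ≤ r i ∧ l j ≤ x ∧ x ≤ r j

lemma ov_symm {n : ℕ} {l r : Fin n → ℝ} {i j : Fin n} (h : ov l r i j) : ov l r j i := by
  obtain ⟨x, h1, h2, h3, h4⟩ := h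
  exact ⟨x, h3, h4, h1, h2⟩

lemma barAdj_ov {k n : ℕ} {l r y : Fin n → ℝ} {i j : Fin n} (h : barAdj k l r y i j) :
    ov l r i j := by
  obtain ⟨x, h1, h2, h3, h4, _⟩ := h
  exact ⟨x, h1, h2, h3, h4⟩

lemma adj_ov {k n : ℕ} {l r y : Fin n → ℝ} {i j : Fin n}
    (h : (barGraph k l r y).Adj i j) : ov l r i j := by
  rw [barGraph, SimpleGraph.fromRel_adj] at h
  rcases h.2 with h' | h'
  · exact barAdj_ov h'
  · exact ov_symm (barAdj_ov h')

lemma not_ov {n : ℕ} {l r : Fin n → ℝ} (hl : ∀ i, l i ≤ r i) {i j : Fin n}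
    (h : ¬ ov l r i j) : r i < l j ∨ r j < l i := by
  by_contra hc
  push_neg at hc
  exact h ⟨max (l i) (l j), le_max_left _ _, max_le (hl i) hc.1,
    le_max_right _ _, max_le hc.2 (hl j)⟩

lemma not_between_left {u v : ℝ} : ¬ (min u v < u ∧ u < max u v) := by
  rcases le_total u v with h | h
  · simp [min_eq_left h]
  · simp [max_eq_left h]

lemma not_between_right {u v : ℝ} : ¬ (min u v < v ∧ v < max u v) := by
  rcases le_total u v with h | h
  · simp [max_eq_right h]
  · simp [min_eq_right h]

/-- Key structural lemma (ordered version): if bars `s` and `t` have disjoint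
intervals (`s` left of `t`), while `p` and `q` each overlap both, then `p` and
`q` see each other with no intervening bar (when there are only these four bars). -/
lemma struct {k n : ℕ} {l r y : Fin n → ℝ} {p q s t : Fin n}
    (hsurj : ∀ m : Fin n, m = p ∨ m = q ∨ m = s ∨ m = t)
    (hst : r s < l t)
    (hsp : ov l r s p) (hsq : ov l r s q) (htp : ov l r t p) (htq : ov l r t q) :
    barAdj k l r y p q := by
  set x : ℝ := (r s + l t) / 2 with hx
  have hx1 : r s < x := by rw [hx]; linarith
  have hx2 : x < l t := by rw [hx]; linarith
  obtain ⟨x1, hs1, hs2, hp1, hp2⟩ := hsp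
  obtain ⟨x2, ht1, ht2, tp1, tp2⟩ := htp
  obtain ⟨x3, hs3, hs4, hq1, hq2⟩ := hsq
  obtain ⟨x4, ht3, ht4, tq1, tq2⟩ := htq
  refine ⟨x, by linarith, by linarith, by linarith, by linarith, ?_⟩
  have hempty : {m : Fin n | min (y p) (y q) < y m ∧ y m < max (y p) (y q) ∧
      l m ≤ x ∧ x ≤ r m} = ∅ := by
    ext m
    simp only [Set.mem_setOf_eq, Set.mem_empty_iff_false, iff_false]
    rintro ⟨h1, h2, h3, h4⟩
    rcases hsurj m with rfl | rfl | rfl | rfl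
    · exact not_between_left ⟨h1, h2⟩
    · exact not_between_right ⟨h1, h2⟩
    · linarith
    · linarith
  rw [hempty, Set.ncard_empty]
  exact Nat.zero_le k

/-- Unordered version of `struct`. -/
lemma struct' {k n : ℕ} {l r y : Fin n → ℝ} (hl : ∀ i, l i < r i) {p q s t : Fin n}
    (hsurj : ∀ m : Fin n, m = p ∨ m = q ∨ m = s ∨ m = t)
    (hst : ¬ ov l r s t)
    (hsp : ov l r s p) (hsq : ov l r s q) (htp : ov l r t p) (htq : ov l r t q) :
    barAdj k l r y p q := by
  rcases not_ov (fun i => (hl i).le) hst with h | h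
  · exact struct hsurj h hsp hsq htp htq
  · exact struct (fun m => by rcases hsurj m with h'|h'|h'|h' <;> tauto) h htp htq hsp hsq

lemma barAdj_of_between_subsingleton {k n : ℕ} {l r y : Fin n → ℝ} {i j w : Fin n}
    (hk : 1 ≤ k) (hov : ov l r i j)
    (hw : ∀ m : Fin n, min (y i) (y j) < y m ∧ y m < max (y i) (y j) → m = w) :
    barAdj k l r y i j := by
  obtain ⟨x, h1, h2, h3, h4⟩ := hov
  refine ⟨x, h1, h2, h3, h4, ?_⟩
  calc ({m : Fin n | min (y i) (y j) < y m ∧ y m < max (y i) (y j) ∧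
        l m ≤ x ∧ x ≤ r m}).ncard
      ≤ ({w} : Set (Fin n)).ncard := by
        refine Set.ncard_le_ncard ?_ (Set.finite_singleton w)
        intro m hm
        exact Set.mem_singleton_iff.mpr (hw m ⟨hm.1, hm.2.1⟩)
    _ = 1 := Set.ncard_singleton w
    _ ≤ k := hk

lemma barAdj_of_between_empty {k n : ℕ} {l r y : Fin n → ℝ} {i j : Fin n}
    (hov : ov l r i j)
    (hw : ∀ m : Fin n, ¬ (min (y i) (y j) < y m ∧ y m < max (y i) (y j))) :
    barAdj k l r y i j := by
  obtain ⟨x, h1, h2, h3, h4⟩ := hov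
  refine ⟨x, h1, h2, h3, h4, ?_⟩
  have hempty : {m : Fin n | min (y i) (y j) < y m ∧ y m < max (y i) (y j) ∧
      l m ≤ x ∧ x ≤ r m} = ∅ := by
    ext m
    simp only [Set.mem_setOf_eq, Set.mem_empty_iff_false, iff_false]
    rintro ⟨h1', h2', _, _⟩
    exact hw m ⟨h1', h2'⟩
  rw [hempty, Set.ncard_empty]
  exact Nat.zero_le k

set_option maxHeartbeats 1000000 in
/-- For every `i ≥ 1`, the cycle `C₄` on four vertices is not a bar
`i`-visibility graph. -/
theorem cycleGraph_four_not_bar_i_visibility (i : ℕ) (hi : 1 ≤ i) :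
    ¬ IsBarKVisibilityGraph i (SimpleGraph.cycleGraph 4) := by
  rintro ⟨n, l, r, y, hl, hy, ⟨φ⟩⟩
  set a := φ (0 : Fin 4) with ha
  set b := φ (1 : Fin 4) with hb
  set c := φ (2 : Fin 4) with hc
  set d := φ (3 : Fin 4) with hd
  have hsurj : ∀ m : Fin n, m = a ∨ m = b ∨ m = c ∨ m = d := by
    intro m
    obtain ⟨v, hv⟩ := φ.toEquiv.surjective m
    subst hv
    fin_cases v <;> tauto
  -- edges of C₄
  have eab : (barGraph i l r y).Adj a b := φ.map_adj_iff.mpr (by decide)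
  have ebc : (barGraph i l r y).Adj b c := φ.map_adj_iff.mpr (by decide)
  have ecd : (barGraph i l r y).Adj c d := φ.map_adj_iff.mpr (by decide)
  have eda : (barGraph i l r y).Adj d a := φ.map_adj_iff.mpr (by decide)
  have nac : ¬ (barGraph i l r y).Adj a c := fun h =>
    (by decide : ¬ (SimpleGraph.cycleGraph 4).Adj 0 2) (φ.map_adj_iff.mp h)
  have nbd : ¬ (barGraph i l r y).Adj b d := fun h =>
    (by decide : ¬ (SimpleGraph.cycleGraph 4).Adj 1 3) (φ.map_adj_iff.mp h)
  have hane : a ≠ c := fun h =>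
    (by decide : (0 : Fin 4) ≠ 2) (φ.toEquiv.injective h)
  have hbne : b ≠ d := fun h =>
    (by decide : (1 : Fin 4) ≠ 3) (φ.toEquiv.injective h)
  -- overlaps from the edges
  have ovab : ov l r a b := adj_ov eab
  have ovbc : ov l r b c := adj_ov ebc
  have ovcd : ov l r c d := adj_ov ecd
  have ovda : ov l r d a := adj_ov eda
  -- non-adjacency gives non-barAdj
  have nadjac : ¬ barAdj i l r y a c := fun h =>
    nac ((SimpleGraph.fromRel_adj _ _ _).mpr ⟨hane, Or.inl h⟩)
  have nadjbd : ¬ barAdj i l r y b d := fun h =>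
    nbd ((SimpleGraph.fromRel_adj _ _ _).mpr ⟨hbne, Or.inl h⟩)
  by_cases hP : (min (y a) (y c) < y b ∧ y b < max (y a) (y c)) ∧
      (min (y a) (y c) < y d ∧ y d < max (y a) (y c))
  · -- both b and d are between a and c in height; then nothing is between b and d
    obtain ⟨⟨hb1, hb2⟩, hd1, hd2⟩ := hP
    have hw : ∀ m : Fin n, ¬ (min (y b) (y d) < y m ∧ y m < max (y b) (y d)) := by
      rintro m ⟨h1, h2⟩
      rcases hsurj m with rfl | rfl | rfl | rfl
      · rcases le_total (y a) (y c) with h | h <;>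
          rcases le_total (y b) (y d) with h' | h' <;>
          simp only [min_eq_left, min_eq_right, max_eq_left, max_eq_right, h, h']
            at hb1 hb2 hd1 hd2 h1 h2 <;> linarith
      · exact not_between_left ⟨h1, h2⟩
      · rcases le_total (y a) (y c) with h | h <;>
          rcases le_total (y b) (y d) with h' | h' <;>
          simp only [min_eq_left, min_eq_right, max_eq_left, max_eq_right, h, h']
            at hb1 hb2 hd1 hd2 h1 h2 <;> linarith
      · exact not_between_right ⟨h1, h2⟩
    have hnov : ¬ ov l r b d := fun hov => nadjbd (barAdj_of_between_empty hov hw)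
    have hadj : barAdj i l r y a c :=
      struct' hl (fun m => by rcases hsurj m with h|h|h|h <;> tauto) hnov
        (ov_symm ovab) ovbc ovda (ov_symm ovcd)
    exact nadjac hadj
  · -- some diagonal neighbour is not between a and c:
    rcases not_and_or.mp hP with hQ | hQ
    · -- b is not between a and c, so only d can be between
      have hw : ∀ m : Fin n, min (y a) (y c) < y m ∧ y m < max (y a) (y c) → m = d := by
        rintro m ⟨h1, h2⟩
        rcases hsurj m with rfl | rfl | rfl | rfl
        · exact absurd ⟨h1, h2⟩ not_between_left
        · exact absurd ⟨h1, h2⟩ hQ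
        · exact absurd ⟨h1, h2⟩ not_between_right
        · rfl
      have hnov : ¬ ov l r a c := fun hov =>
        nadjac (barAdj_of_between_subsingleton hi hov hw)
      have hadj : barAdj i l r y b d :=
        struct' hl (fun m => by rcases hsurj m with h|h|h|h <;> tauto) hnov
          ovab (ov_symm ovda) (ov_symm ovbc) ovcd
      exact nadjbd hadj
    · -- d is not between a and c, so only b can be between
      have hw : ∀ m : Fin n, min (y a) (y c) < y m ∧ y m < max (y a) (y c) → m = b := by
        rintro m ⟨h1, h2⟩
        rcases hsurj m with rfl | rfl | rfl | rfl
        · exact absurd ⟨h1, h2⟩ not_between_left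
        · rfl
        · exact absurd ⟨h1, h2⟩ not_between_right
        · exact absurd ⟨h1, h2⟩ hQ
      have hnov : ¬ ov l r a c := fun hov =>
        nadjac (barAdj_of_between_subsingleton hi hov hw)
      have hadj : barAdj i l r y b d :=
        struct' hl (fun m => by rcases hsurj m with h|h|h|h <;> tauto) hnov
          ovab (ov_symm ovda) (ov_symm ovbc) ovcd
      exact nadjbd hadj
end

section
/- Fix integers k ≥ 0 and n ≥ k+3. Then the average over all permutations σ of {1, …, n} of the number of edges E(σ) of the associated semi-bar k-visibility graph satisfies (1/n!) · Σ_{σ ∈ S_n} E(σ) = (1/2)(k+1)(4n − 3k − 6 − 2(k+2) Σ_{l=k+3}^{n} 1/l). -/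
/-- The semi-bar `k`-visibility graph of the permutation `σ`: `i < j` are
adjacent iff at most `k` indices `m` with `i < m < j` satisfy
`σ m > min (σ i) (σ j)`. -/
def semiBarPermGraph (k : ℕ) {n : ℕ} (σ : Equiv.Perm (Fin n)) : SimpleGraph (Fin n) :=
  SimpleGraph.fromRel (fun i j => i < j ∧
    ({m : Fin n | i < m ∧ m < j ∧ min (σ i) (σ j) < σ m}.ncard ≤ k))

/-- The number of edges of the semi-bar `k`-visibility graph of `σ`. -/
noncomputable def semiBarPermEdges (k : ℕ) {n : ℕ} (σ : Equiv.Perm (Fin n)) : ℕ :=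
  (semiBarPermGraph k σ).edgeSet.ncard

/-!
For a pair `i < j` at distance `d`, the pair is an edge exactly when `σ i` and `σ j` are both among
the `k + 2` largest values of `σ` on the window `[i, j]`. Permuting positions inside the window is a
bijection of `S_n` that moves any ordered pair of window positions to any other, so a double count
over ordered pairs of window positions shows that this happens for a fraction
`m (m - 1) / (d (d + 1))` of all permutations, where `m = min (k + 2) (d + 1)`. Summing over pairs
by distance and telescoping `1 / (d (d + 1)) = 1 / d - 1 / (d + 1)` gives the formula.
-/

open Finset Equiv

section CountAbove

variable {α β : Type*} [LinearOrder β] (f : α → β) (W : Finset α)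

def countAbove (p : α) : ℕ := #{m ∈ W | f p < f m}

variable {f W}

lemma countAbove_le_countAbove {p q : α} (h : f q ≤ f p) : countAbove f W p ≤ countAbove f W q :=
  card_le_card <| monotone_filter_right W fun _ _ => h.trans_lt

lemma countAbove_lt_countAbove {p q : α} (hq : q ∈ W) (h : f p < f q) :
    countAbove f W q < countAbove f W p := by
  refine card_lt_card ⟨monotone_filter_right W fun _ _ => h.trans, fun hsub => ?_⟩
  exact lt_irrefl (f q) (mem_filter.mp (hsub (mem_filter.mpr ⟨hq, h⟩))).2

lemma countAbove_lt_card {p : α} (hp : p ∈ W) : countAbove f W p < #W :=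
  card_lt_card <| filter_ssubset.mpr ⟨p, hp, lt_irrefl _⟩

lemma injOn_countAbove (hf : Set.InjOn f W) : Set.InjOn (countAbove f W) W := by
  intro p hp q hq hpq
  by_contra hne
  rcases lt_or_gt_of_ne (hf.ne hp hq hne) with h | h
  · exact (countAbove_lt_countAbove hq h).ne' hpq
  · exact (countAbove_lt_countAbove hp h).ne hpq

lemma image_countAbove [DecidableEq α] (hf : Set.InjOn f W) : W.image (countAbove f W) = range #W :=
  eq_of_subset_of_card_le
    (fun _ hr => by
      obtain ⟨p, hp, rfl⟩ := mem_image.mp hr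
      exact mem_range.mpr (countAbove_lt_card hp))
    (by rw [card_range, card_image_of_injOn (injOn_countAbove hf)])

theorem card_filter_countAbove_lt (hf : Set.InjOn f W) (g : ℕ) :
    #{p ∈ W | countAbove f W p < g} = min g #W := by
  classical
  have h := filter_image (s := W) (f := countAbove f W) (p := (· < g))
  have hrange : {r ∈ range #W | r < g} = range (min g #W) := by ext; simp [and_comm]
  rw [image_countAbove hf, hrange] at h
  rw [← card_image_of_injOn ((injOn_countAbove hf).mono (filter_subset _ W)), ← h, card_range]

lemma countAbove_comp {γ : Type*} (τ : α ↪ γ) (g : γ → β) (p : α) :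
    countAbove (g ∘ τ) W p = countAbove g (W.map τ) (τ p) := by
  rw [countAbove, countAbove, filter_map, card_map]
  rfl

end CountAbove

lemma exists_perm_map_eq_self_of_pairs {α : Type*} [DecidableEq α] {W : Finset α} {p q p' q' : α}
    (hp : p ∈ W) (hq : q ∈ W) (hp' : p' ∈ W) (hq' : q' ∈ W) (hpq : p ≠ q) (hpq' : p' ≠ q') :
    ∃ τ : Perm α, W.map τ.toEmbedding = W ∧ τ p = p' ∧ τ q = q' := by
  obtain ⟨π, hπp, hπq⟩ := MulAction.is_two_pretransitive_iff.mp
    (Perm.isMultiplyPretransitive W 2) (show (⟨p, hp⟩ : W) ≠ ⟨q, hq⟩ by simpa using hpq)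
    (show (⟨p', hp'⟩ : W) ≠ ⟨q', hq'⟩ by simpa using hpq')
  refine ⟨Perm.ofSubtype π, ?_, ?_, ?_⟩
  · refine eq_of_subset_of_card_le (fun x hx => ?_) (card_map _).ge
    obtain ⟨y, hy, rfl⟩ := mem_map.mp hx
    simp [Perm.ofSubtype_apply_of_mem π hy]
  · rw [Perm.ofSubtype_apply_of_mem π hp]
    exact congrArg Subtype.val hπp
  · rw [Perm.ofSubtype_apply_of_mem π hq]
    exact congrArg Subtype.val hπq

section TopPairs

variable {α : Type*} [LinearOrder α] [Fintype α]

def topPairPerms (W : Finset α) (g : ℕ) (p q : α) : Finset (Perm α) :=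
  {σ | countAbove σ W p < g ∧ countAbove σ W q < g}

variable {W : Finset α} {g : ℕ}

lemma card_topPairPerms_eq {p q p' q' : α} (hp : p ∈ W) (hq : q ∈ W) (hp' : p' ∈ W)
    (hq' : q' ∈ W) (hpq : p ≠ q) (hpq' : p' ≠ q') :
    #(topPairPerms W g p q) = #(topPairPerms W g p' q') := by
  obtain ⟨τ, hτW, hτp, hτq⟩ := exists_perm_map_eq_self_of_pairs hp' hq' hp hq hpq' hpq
  have hcount (σ : Perm α) (x : α) : countAbove (σ ∘ τ) W x = countAbove σ W (τ x) := by
    have h := countAbove_comp (W := W) τ.toEmbedding σ x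
    rwa [hτW] at h
  refine card_equiv (Equiv.mulRight τ) fun σ => ?_
  simp [topPairPerms, hcount, hτp, hτq]

theorem card_topPairPerms_mul {p q : α} (hp : p ∈ W) (hq : q ∈ W) (hpq : p ≠ q) :
    #(topPairPerms W g p q) * (#W * (#W - 1)) =
      (Fintype.card α).factorial * (min g #W * (min g #W - 1)) := by
  have hpairs (σ : Perm α) : #{x ∈ W.offDiag | σ ∈ topPairPerms W g x.1 x.2} =
      min g #W * (min g #W - 1) := by
    rw [← card_filter_countAbove_lt σ.injective.injOn g, Nat.mul_sub_one, ← offDiag_card]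
    congr 1
    ext x
    simp only [topPairPerms, mem_filter, mem_offDiag, mem_univ, true_and]
    tauto
  calc #(topPairPerms W g p q) * (#W * (#W - 1))
      = ∑ x ∈ W.offDiag, #(topPairPerms W g x.1 x.2) := by
        rw [sum_const_nat fun x hx => (card_topPairPerms_eq hp hq (mem_offDiag.mp hx).1
          (mem_offDiag.mp hx).2.1 hpq (mem_offDiag.mp hx).2.2).symm, offDiag_card,
          Nat.mul_sub_one, mul_comm]
    _ = ∑ σ : Perm α, #{x ∈ W.offDiag | σ ∈ topPairPerms W g x.1 x.2} := by
        simpa only [bipartiteAbove, bipartiteBelow, filter_univ_mem] using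
          (sum_card_bipartiteAbove_eq_sum_card_bipartiteBelow (s := univ) (t := W.offDiag)
            (r := fun σ x => σ ∈ topPairPerms W g x.1 x.2)).symm
    _ = (Fintype.card α).factorial * (min g #W * (min g #W - 1)) := by
        rw [sum_congr rfl fun σ _ => hpairs σ, sum_const, card_univ, Fintype.card_perm,
          smul_eq_mul]

end TopPairs

section Visibility

variable {α β : Type*} [LinearOrder α] [LocallyFiniteOrder α] [LinearOrder β] {f : α → β}
  {i j : α}

lemma card_filter_Icc_min_lt (hij : i < j) (hf : f i ≠ f j) :
    #{m ∈ Icc i j | min (f i) (f j) < f m} = #{m ∈ Ioo i j | min (f i) (f j) < f m} + 1 := by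
  rw [← Ioc_insert_left hij.le, ← Ioo_insert_right hij, filter_insert, filter_insert]
  rcases hf.lt_or_gt with h | h <;> simp [h, h.le]

theorem ncard_visible_le_iff_countAbove_lt (hij : i < j) (hf : f i ≠ f j) (k : ℕ) :
    {m | i < m ∧ m < j ∧ min (f i) (f j) < f m}.ncard ≤ k ↔
      countAbove f (Icc i j) i < k + 2 ∧ countAbove f (Icc i j) j < k + 2 := by
  obtain ⟨y, hy, hfy⟩ : ∃ y, (y = i ∨ y = j) ∧ f y = min (f i) (f j) := by
    rcases min_choice (f i) (f j) with h | h
    exacts [⟨i, .inl rfl, h.symm⟩, ⟨j, .inr rfl, h.symm⟩]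
  have hmid : {m | i < m ∧ m < j ∧ min (f i) (f j) < f m}.ncard + 1 =
      countAbove f (Icc i j) y := by
    rw [countAbove, hfy, card_filter_Icc_min_lt hij hf, ← Set.ncard_coe_finset]
    congr 2
    ext m
    simp [and_assoc]
  constructor
  · intro h
    have hle (x : α) (hx : min (f i) (f j) ≤ f x) : countAbove f (Icc i j) x < k + 2 := by
      have := countAbove_le_countAbove (W := Icc i j) (hfy ▸ hx)
      omega
    exact ⟨hle i (min_le_left _ _), hle j (min_le_right _ _)⟩
  · rintro ⟨hi, hj⟩
    rcases hy with rfl | rfl <;> omega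

end Visibility

lemma ncard_edgeSet_fromRel_lt {α : Type*} [LinearOrder α] [Fintype α] (r : α → α → Prop)
    [DecidableRel r] :
    (SimpleGraph.fromRel fun i j => i < j ∧ r i j).edgeSet.ncard =
      #{x : α × α | x.1 < x.2 ∧ r x.1 x.2} := by
  have hedge : (SimpleGraph.fromRel fun i j => i < j ∧ r i j).edgeSet =
      (fun x : α × α => s(x.1, x.2)) '' {x | x.1 < x.2 ∧ r x.1 x.2} := by
    ext e
    induction e with
    | h a b =>
      simp only [SimpleGraph.mem_edgeSet, SimpleGraph.fromRel_adj, Set.mem_image,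
        Set.mem_ofPred_eq, Prod.exists, Sym2.eq_iff]
      constructor
      · rintro ⟨-, h | h⟩
        exacts [⟨a, b, h, .inl ⟨rfl, rfl⟩⟩, ⟨b, a, h, .inr ⟨rfl, rfl⟩⟩]
      · rintro ⟨x, y, h, ⟨rfl, rfl⟩ | ⟨rfl, rfl⟩⟩
        exacts [⟨h.1.ne, .inl h⟩, ⟨h.1.ne', .inr h⟩]
  have hinj : Set.InjOn (fun x : α × α => s(x.1, x.2)) {x | x.1 < x.2 ∧ r x.1 x.2} := by
    rintro ⟨a, b⟩ hab ⟨c, d⟩ hcd h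
    rcases Sym2.eq_iff.mp h with ⟨rfl, rfl⟩ | ⟨rfl, rfl⟩
    · rfl
    · exact absurd hab.1 hcd.1.asymm
  rw [hedge, hinj.ncard_image, ← Set.ncard_coe_finset, coe_filter_univ]

noncomputable def visibleProb (k d : ℕ) : ℝ :=
  if d ≤ k + 1 then 1 else (k + 1) * (k + 2) / (d * (d + 1))

lemma sum_range_visibleProb_of_le {k j : ℕ} (hj : j ≤ k + 1) :
    ∑ d ∈ range j, visibleProb k (d + 1) = j := by
  rw [sum_congr rfl fun d hd => show visibleProb k (d + 1) = 1 from if_pos (by simp at hd; omega)]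
  simp

lemma sum_range_visibleProb {k j : ℕ} (hj : k + 1 ≤ j) :
    ∑ d ∈ range j, visibleProb k (d + 1) = (k + 1) * (2 - (k + 2) / (j + 1)) := by
  induction j, hj using Nat.le_induction with
  | base =>
    rw [sum_range_visibleProb_of_le le_rfl]
    push_cast
    field_simp
    ring
  | succ j hj ih =>
    rw [sum_range_succ, ih, visibleProb, if_neg (by omega)]
    push_cast
    field_simp
    ring

lemma sum_range_sum_range_visibleProb {k n : ℕ} (hn : k + 2 ≤ n) :
    ∑ j ∈ range n, ∑ d ∈ range j, visibleProb k (d + 1) =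
      (1 / 2) * (k + 1) * (4 * n - 3 * k - 6 - 2 * (k + 2) * ∑ l ∈ Icc (k + 3) n, (1 : ℝ) / l) := by
  induction n, hn using Nat.le_induction with
  | base =>
    rw [sum_congr rfl fun j hj => sum_range_visibleProb_of_le (by simp at hj; omega),
      Icc_eq_empty (by omega), sum_empty]
    have gauss : (∑ j ∈ range (k + 2), (j : ℝ)) * 2 = (k + 2) * (k + 1) := by
      have h := sum_range_id_mul_two (k + 2)
      rw [show k + 2 - 1 = k + 1 by omega] at h
      have hR := congrArg (Nat.cast (R := ℝ)) h
      push_cast at hR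
      exact hR
    push_cast
    linear_combination gauss / 2
  | succ n hn ih =>
    rw [sum_range_succ, ih, sum_range_visibleProb (by omega), sum_Icc_succ_top (by omega)]
    push_cast
    field_simp
    ring

lemma sum_fin_pairs_lt {M : Type*} [AddCommMonoid M] (n : ℕ) (F : ℕ → M) :
    ∑ x : Fin n × Fin n with x.1 < x.2, F ((x.2 : ℕ) - x.1) =
      ∑ j ∈ range n, ∑ d ∈ range j, F (d + 1) := by
  rw [sum_filter, Fintype.sum_prod_type, sum_comm]
  simp only [Fin.lt_def]
  rw [Fin.sum_univ_eq_sum_range (fun j => ∑ i : Fin n, if (i : ℕ) < j then F (j - i) else 0)]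
  refine sum_congr rfl fun j hj => ?_
  rw [Fin.sum_univ_eq_sum_range (fun i => if i < j then F (j - i) else 0), ← sum_filter,
    show {i ∈ range n | i < j} = range j by ext; simp at hj ⊢; omega,
    ← sum_range_reflect]
  exact sum_congr rfl fun i hi => by simp at hi; congr 1; omega

lemma card_topPairPerms_Icc (k : ℕ) {n : ℕ} {i j : Fin n} (hij : i < j) :
    (#(topPairPerms (Icc i j) (k + 2) i j) : ℝ) = n.factorial * visibleProb k (j - i) := by
  have h := card_topPairPerms_mul (g := k + 2) (left_mem_Icc.2 hij.le) (right_mem_Icc.2 hij.le)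
    hij.ne
  obtain ⟨d, hd, hji⟩ : ∃ d, 1 ≤ d ∧ (j : ℕ) - i = d := ⟨_, Nat.sub_pos_of_lt hij, rfl⟩
  rw [Fin.card_Icc, show (j : ℕ) + 1 - i = d + 1 by omega, Fintype.card_fin,
    Nat.add_sub_cancel] at h
  rw [hji, visibleProb]
  split_ifs with hdk
  · rw [min_eq_right (by omega)] at h
    rw [Nat.eq_of_mul_eq_mul_right (Nat.mul_pos (by omega) hd) h, mul_one]
  · rw [min_eq_left (by omega), show k + 2 - 1 = k + 1 by omega] at h
    have hR : (#(topPairPerms (Icc i j) (k + 2) i j) : ℝ) * ((d + 1) * d) =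
        n.factorial * ((k + 2) * (k + 1)) := by
      exact_mod_cast h
    have hd0 : (d : ℝ) ≠ 0 := by positivity
    field_simp
    linear_combination hR

theorem sum_semiBarPermEdges (k n : ℕ) :
    ∑ σ : Perm (Fin n), (semiBarPermEdges k σ : ℝ) =
      n.factorial * ∑ j ∈ range n, ∑ d ∈ range j, visibleProb k (d + 1) := by
  classical
  let pairs : Finset (Fin n × Fin n) := {x | x.1 < x.2}
  have hedges (σ : Perm (Fin n)) : semiBarPermEdges k σ =
      #{x ∈ pairs | σ ∈ topPairPerms (Icc x.1 x.2) (k + 2) x.1 x.2} := by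
    rw [semiBarPermEdges, semiBarPermGraph, ncard_edgeSet_fromRel_lt, filter_filter]
    refine congrArg card (filter_congr fun x _ => and_congr_right fun hx => ?_)
    rw [ncard_visible_le_iff_countAbove_lt hx (σ.injective.ne hx.ne)]
    simp [topPairPerms]
  have hcount : ∑ σ : Perm (Fin n), semiBarPermEdges k σ =
      ∑ x ∈ pairs, #(topPairPerms (Icc x.1 x.2) (k + 2) x.1 x.2) := by
    simpa only [hedges, bipartiteAbove, bipartiteBelow, filter_univ_mem] using
      sum_card_bipartiteAbove_eq_sum_card_bipartiteBelow (s := univ) (t := pairs)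
        (r := fun σ x => σ ∈ topPairPerms (Icc x.1 x.2) (k + 2) x.1 x.2)
  calc ∑ σ : Perm (Fin n), (semiBarPermEdges k σ : ℝ)
      = ∑ x ∈ pairs, (#(topPairPerms (Icc x.1 x.2) (k + 2) x.1 x.2) : ℝ) := by
        exact_mod_cast hcount
    _ = ∑ x ∈ pairs, n.factorial * visibleProb k ((x.2 : ℕ) - x.1) :=
        sum_congr rfl fun x hx => card_topPairPerms_Icc k (mem_filter.mp hx).2
    _ = n.factorial * ∑ j ∈ range n, ∑ d ∈ range j, visibleProb k (d + 1) := by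
        rw [← mul_sum, sum_fin_pairs_lt]

/-- For `n ≥ k + 3`, the average number of edges of the semi-bar `k`-visibility
graph over all permutations of `{1, …, n}` equals
`(1/2)(k+1)(4n - 3k - 6 - 2(k+2) ∑_{l=k+3}^n 1/l)`. -/
theorem expected_semiBar_edges (k n : ℕ) (hn : k + 3 ≤ n) :
    (∑ σ : Equiv.Perm (Fin n), (semiBarPermEdges k σ : ℝ)) / (n.factorial : ℝ) =
      (1 / 2) * (k + 1) *
        (4 * n - 3 * k - 6 - 2 * (k + 2) * ∑ l ∈ Finset.Icc (k + 3) n, (1 : ℝ) / l) := by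
  rw [sum_semiBarPermEdges, mul_div_cancel_left₀ _ (by positivity),
    sum_range_sum_range_visibleProb (by omega)]
end

section
/- Fix integers n ≥ 1 and 1 ≤ i ≤ n. For a permutation σ of {1, …, n}, let R_i(σ) be the number of indices j ∈ {1, …, n} such that σ(j) is the i-th largest value among σ(1), …, σ(j). Then the average over all permutations satisfies (1/n!) · Σ_{σ ∈ S_n} R_i(σ) = Σ_{j=i}^{n} 1/j. -/
/-- `numIthRecords i σ` is the number of indices `j` such that `σ j` is the
`i`-th largest value among `σ 1, …, σ j`, i.e. exactly `i - 1` of the earlier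
values exceed `σ j`. -/
noncomputable def numIthRecords (i : ℕ) {n : ℕ} (σ : Equiv.Perm (Fin n)) : ℕ :=
  {j : Fin n | ({m : Fin n | m < j ∧ σ j < σ m}).ncard = i - 1}.ncard

/-!
For a fixed position `j`, the number of earlier values exceeding `σ j` is uniformly distributed
on `{0, …, j}`. Indeed, precomposing `σ` with the transposition of `t ≤ j` and `j` keeps the set
of values in positions `≤ j` and moves `σ t` to position `j`; as `t` runs over `{0, …, j}` the
count runs over each of `0, …, j` exactly once, since distinct values have distinct numbers of
larger values in that set. So position `j` is counted in `R_i` with probability `1 / (j + 1)`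
when `i - 1 ≤ j` and never otherwise, and summing over `j` gives `∑_{j=i}^n 1/j`.
-/

open Finset Equiv
open scoped Nat

namespace Finset

variable {α β : Type*} [LinearOrder β] {f : α → β} {s : Finset α}

theorem card_filter_lt_lt_card {t : α} (ht : t ∈ s) : #{m ∈ s | f t < f m} < #s :=
  card_lt_card <| filter_ssubset.2 ⟨t, ht, lt_irrefl _⟩

theorem injOn_card_filter_lt (hf : Set.InjOn f s) :
    Set.InjOn (fun t ↦ #{m ∈ s | f t < f m}) s := by
  have key : ∀ t ∈ s, ∀ u ∈ s, f t < f u → #{m ∈ s | f u < f m} < #{m ∈ s | f t < f m} :=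
    fun t _ u hu htu ↦ card_lt_card <| (ssubset_iff_of_subset
      (monotone_filter_right s fun _ _ ↦ htu.trans)).2 ⟨u, by simp [hu, htu]⟩
  intro t ht u hu h
  rcases lt_trichotomy (f t) (f u) with htu | htu | htu
  · exact absurd h (key t ht u hu htu).ne'
  · exact hf ht hu htu
  · exact absurd h (key u hu t ht htu).ne

theorem card_filter_card_filter_lt_eq_one [DecidableEq α] (hf : Set.InjOn f s) {k : ℕ}
    (hk : k < #s) :
    #{t ∈ s | #{m ∈ s | f t < f m} = k} = 1 := by
  obtain ⟨t, ht, htk⟩ := surjOn_of_injOn_of_card_le (t := range #s) _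
    (fun t ht ↦ mem_range.2 (card_filter_lt_lt_card ht)) (injOn_card_filter_lt hf)
    (by simp) (mem_range.2 hk)
  refine card_eq_one.2 ⟨t, ext fun u ↦ ⟨fun hu ↦ ?_, fun hu ↦ ?_⟩⟩
  · rw [mem_filter] at hu
    exact mem_singleton.2 (injOn_card_filter_lt hf hu.1 ht (hu.2.trans htk.symm))
  · rw [mem_singleton.1 hu]
    exact mem_filter.2 ⟨ht, htk⟩

end Finset

section

variable {n : ℕ}

def numLargerBefore (σ : Perm (Fin n)) (j : Fin n) : ℕ := #{m ∈ Iio j | σ j < σ m}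

theorem ncard_setOf_lt_eq_numLargerBefore (σ : Perm (Fin n)) (j : Fin n) :
    {m : Fin n | m < j ∧ σ j < σ m}.ncard = numLargerBefore σ j := by
  rw [numLargerBefore, ← Set.ncard_coe_finset]
  congr 1
  ext m
  simp

theorem numIthRecords_eq_card (i : ℕ) (σ : Perm (Fin n)) :
    numIthRecords i σ = #{j | numLargerBefore σ j = i - 1} := by
  rw [numIthRecords, ← Set.ncard_coe_finset]
  congr 1
  ext j
  simp [ncard_setOf_lt_eq_numLargerBefore]

theorem numLargerBefore_le (σ : Perm (Fin n)) (j : Fin n) : numLargerBefore σ j ≤ j :=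
  (card_filter_le _ _).trans (Fin.card_Iio j).le

theorem numLargerBefore_eq_card_Iic (σ : Perm (Fin n)) (j : Fin n) :
    numLargerBefore σ j = #{m ∈ Iic j | σ j < σ m} := by
  rw [numLargerBefore, ← Iio_insert, filter_insert, if_neg (lt_irrefl _)]

theorem numLargerBefore_mul_swap (σ : Perm (Fin n)) {t j : Fin n} (htj : t ≤ j) :
    numLargerBefore (σ * swap t j) j = #{m ∈ Iic j | σ t < σ m} := by
  have hmaps : ∀ m ∈ Iic j, swap t j m ∈ Iic j := by
    intro m hm
    rw [mem_Iic] at hm ⊢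
    rcases eq_or_ne m t with rfl | hmt
    · simp
    rcases eq_or_ne m j with rfl | hmj
    · simpa using htj
    · rwa [swap_apply_of_ne_of_ne hmt hmj]
  rw [numLargerBefore_eq_card_Iic]
  refine card_nbij' (swap t j) (swap t j) ?_ ?_ (fun m _ ↦ swap_apply_self t j m)
    (fun m _ ↦ swap_apply_self t j m)
  · intro m hm
    simp only [mem_coe, mem_filter, Perm.mul_apply, swap_apply_right] at hm ⊢
    exact ⟨hmaps m hm.1, hm.2⟩
  · intro m hm
    simp only [mem_coe, mem_filter, Perm.mul_apply, swap_apply_right, swap_apply_self] at hm ⊢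
    exact ⟨hmaps m hm.1, hm.2⟩

theorem succ_mul_card_numLargerBefore_eq {j : Fin n} {k : ℕ} (hk : k ≤ j) :
    (j + 1) * #{σ : Perm (Fin n) | numLargerBefore σ j = k} = n ! := by
  have hswap : ∀ t ∈ Iic j, #{σ : Perm (Fin n) | #{m ∈ Iic j | σ t < σ m} = k} =
      #{σ : Perm (Fin n) | numLargerBefore σ j = k} := fun t ht ↦
    card_equiv (Equiv.mulRight (swap t j)) fun σ ↦ by
      simp [numLargerBefore_mul_swap σ (mem_Iic.1 ht)]
  calc (j + 1) * #{σ : Perm (Fin n) | numLargerBefore σ j = k}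
      = ∑ t ∈ Iic j, #{σ : Perm (Fin n) | #{m ∈ Iic j | σ t < σ m} = k} := by
        rw [sum_congr rfl hswap, sum_const, Fin.card_Iic, smul_eq_mul]
    _ = ∑ σ : Perm (Fin n), #{t ∈ Iic j | #{m ∈ Iic j | σ t < σ m} = k} := by
        simp only [card_filter]
        exact sum_comm
    _ = ∑ _σ : Perm (Fin n), 1 :=
        sum_congr rfl fun σ _ ↦ card_filter_card_filter_lt_eq_one σ.injective.injOn
          (by rw [Fin.card_Iic]; omega)
    _ = n ! := by simp [Fintype.card_perm]

theorem card_numLargerBefore_eq_of_lt {j : Fin n} {k : ℕ} (hk : (j : ℕ) < k) :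
    #{σ : Perm (Fin n) | numLargerBefore σ j = k} = 0 :=
  card_eq_zero.2 <| filter_eq_empty_iff.2 fun σ _ ↦ ((numLargerBefore_le σ j).trans_lt hk).ne

theorem card_numLargerBefore_eq_div_factorial (j : Fin n) (k : ℕ) :
    (#{σ : Perm (Fin n) | numLargerBefore σ j = k} : ℝ) / n ! =
      if k ≤ j then 1 / ((j : ℝ) + 1) else 0 := by
  split_ifs with hk
  · have h := succ_mul_card_numLargerBefore_eq hk
    rw [div_eq_div_iff (by positivity) (by positivity), ← h]
    push_cast
    ring
  · simp [card_numLargerBefore_eq_of_lt (not_le.1 hk)]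

theorem sum_ite_le_eq_sum_Icc {i : ℕ} (hi : 1 ≤ i) :
    ∑ j : Fin n, (if i - 1 ≤ (j : ℕ) then 1 / ((j : ℝ) + 1) else 0) =
      ∑ j ∈ Icc i n, (1 : ℝ) / j := by
  rw [Fin.sum_univ_eq_sum_range (fun j ↦ if i - 1 ≤ j then 1 / ((j : ℝ) + 1) else 0),
    ← sum_filter]
  have hfilter : {j ∈ range n | i - 1 ≤ j} = Ico (i - 1) n := by
    ext j
    simp only [mem_filter, mem_range, mem_Ico]
    omega
  rw [hfilter, ← Ico_add_one_right_eq_Icc, ← Nat.sub_add_cancel hi, ← sum_Ico_add']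
  push_cast
  rfl

theorem sum_numIthRecords (i : ℕ) :
    ∑ σ : Perm (Fin n), numIthRecords i σ =
      ∑ j : Fin n, #{σ : Perm (Fin n) | numLargerBefore σ j = i - 1} := by
  simp only [numIthRecords_eq_card, card_filter]
  exact sum_comm

end

theorem expected_numIthRecords_general (n i : ℕ) (h1 : 1 ≤ i) :
    (∑ σ : Equiv.Perm (Fin n), (numIthRecords i σ : ℝ)) / (n.factorial : ℝ) =
      ∑ j ∈ Finset.Icc i n, (1 : ℝ) / j := by
  rw [← Nat.cast_sum, sum_numIthRecords, Nat.cast_sum, sum_div]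
  simp only [card_numLargerBefore_eq_div_factorial]
  exact sum_ite_le_eq_sum_Icc h1

/-- For `1 ≤ i ≤ n`, the average over all permutations `σ` of `{1, …, n}` of the
number of indices `j` such that `σ j` is the `i`-th largest among
`σ 1, …, σ j` equals `∑_{j=i}^n 1/j`. -/
theorem expected_numIthRecords (n i : ℕ) (h1 : 1 ≤ i) (h2 : i ≤ n) :
    (∑ σ : Equiv.Perm (Fin n), (numIthRecords i σ : ℝ)) / (n.factorial : ℝ) =
      ∑ j ∈ Finset.Icc i n, (1 : ℝ) / j :=
  expected_numIthRecords_general n i h1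
end
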